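/- arXiv:2402.16215 — 5 statements merged into one kernel-verified Lean document; each statement's English description precedes it below -/
import Mathlib

section
/- Let X₁, …, X_k be subspaces of a finite-dimensional vector space and A a subspace with A ⊆ X₁ + ⋯ + X_k. If Σᵢ (dim Xᵢ - dim(Xᵢ ∩ A)) ≤ dim((X₁ + ⋯ + X_k)) - dim A + b, then for every subset I ⊆ [k], dim(Σ_{i∈I} Xᵢ) + dim(Σ_{i∉I} Xᵢ) - dim(X₁ + ⋯ + X_k) ≤ dim A + b. -/
open Module

lemma stmt3_aux {F V : Type*} [Field F] [AddCommGroup V] [Module F V]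
    [FiniteDimensional F V] {k : ℕ} (X : Fin k → Submodule F V)
    (A : Submodule F V) (I : Finset (Fin k)) :
    (finrank F ↥((⨆ i ∈ I, X i) ⊔ A) : ℤ)
      ≤ finrank F A + ∑ i ∈ I, ((finrank F ↥(X i) : ℤ) - finrank F ↥(X i ⊓ A)) := by
  classical
  induction I using Finset.induction with
  | empty =>
    have h0 : (⨆ i ∈ (∅ : Finset (Fin k)), X i) = ⊥ := by simp
    rw [h0, bot_sup_eq, Finset.sum_empty, add_zero]
  | @insert a I ha ih =>
    rw [Finset.sum_insert ha]
    set P := (⨆ i ∈ I, X i) ⊔ A with hP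
    have hins : (⨆ i ∈ insert a I, X i) ⊔ A = X a ⊔ P := by
      rw [Finset.iSup_insert, sup_assoc]
    rw [hins]
    have h1 : (finrank F ↥(X a ⊔ P) : ℤ) + finrank F ↥(X a ⊓ P)
        = finrank F ↥(X a) + finrank F ↥P := by
      exact_mod_cast congrArg (Nat.cast : ℕ → ℤ)
        (Submodule.finrank_sup_add_finrank_inf_eq (X a) P)
    have h2 : (finrank F ↥(X a ⊓ A) : ℤ) ≤ finrank F ↥(X a ⊓ P) := by
      exact_mod_cast Submodule.finrank_mono (inf_le_inf_left (X a) le_sup_right)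
    linarith

theorem stmt3 {F V : Type*} [Field F] [AddCommGroup V] [Module F V]
    [FiniteDimensional F V] {k : ℕ} (X : Fin k → Submodule F V)
    (A : Submodule F V) (b : ℕ) (hA : A ≤ ⨆ i, X i)
    (h : ∑ i, ((finrank F ↥(X i) : ℤ) - finrank F ↥(X i ⊓ A))
        ≤ (finrank F ↥(⨆ i, X i) : ℤ) - finrank F A + b) :
    ∀ I : Finset (Fin k),
      (finrank F ↥(⨆ i ∈ I, X i) : ℤ) + finrank F ↥(⨆ i ∈ Iᶜ, X i)
          - finrank F ↥(⨆ i, X i)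
        ≤ finrank F A + b := by
  classical
  intro I
  set P := ⨆ i ∈ I, X i with hPdef
  set Q := ⨆ i ∈ Iᶜ, X i with hQdef
  set S := ⨆ i, X i with hSdef
  have hPQ : P ⊔ Q = S := by
    apply le_antisymm
    · exact sup_le (iSup₂_le fun i _ => le_iSup X i) (iSup₂_le fun i _ => le_iSup X i)
    · refine iSup_le fun i => ?_
      by_cases hi : i ∈ I
      · exact le_sup_of_le_left (le_iSup₂ (f := fun i _ => X i) i hi)
      · exact le_sup_of_le_right (le_iSup₂ (f := fun i _ => X i) i (Finset.mem_compl.mpr hi))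
  have hsum : ∑ i ∈ I, ((finrank F ↥(X i) : ℤ) - finrank F ↥(X i ⊓ A))
      + ∑ i ∈ Iᶜ, ((finrank F ↥(X i) : ℤ) - finrank F ↥(X i ⊓ A))
      = ∑ i, ((finrank F ↥(X i) : ℤ) - finrank F ↥(X i ⊓ A)) :=
    Finset.sum_add_sum_compl I _
  have haux1 := stmt3_aux X A I
  have haux2 := stmt3_aux X A Iᶜ
  -- dimension formulas
  have e1 : (finrank F ↥(P ⊔ Q) : ℤ) + finrank F ↥(P ⊓ Q)
      = finrank F ↥P + finrank F ↥Q := by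
    exact_mod_cast congrArg (Nat.cast : ℕ → ℤ)
      (Submodule.finrank_sup_add_finrank_inf_eq P Q)
  have e2 : (finrank F ↥((P ⊔ A) ⊔ (Q ⊔ A)) : ℤ) + finrank F ↥((P ⊔ A) ⊓ (Q ⊔ A))
      = finrank F ↥(P ⊔ A) + finrank F ↥(Q ⊔ A) := by
    exact_mod_cast congrArg (Nat.cast : ℕ → ℤ)
      (Submodule.finrank_sup_add_finrank_inf_eq (P ⊔ A) (Q ⊔ A))
  have etop : (P ⊔ A) ⊔ (Q ⊔ A) = S := by
    rw [sup_sup_sup_comm, hPQ, sup_idem, sup_eq_left.mpr hA]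
  rw [etop] at e2
  rw [hPQ] at e1
  rw [← hPdef] at haux1
  rw [← hQdef] at haux2
  have hle : (finrank F ↥(P ⊓ Q) : ℤ) ≤ finrank F ↥((P ⊔ A) ⊓ (Q ⊔ A)) := by
    exact_mod_cast Submodule.finrank_mono (inf_le_inf le_sup_left le_sup_left)
  linarith
end

section
/- (Main Lemma) Let X₁, …, X_k be subspaces of a finite-dimensional vector space over a field F such that for every subset I ⊆ [k], dim(Σ_{i∈I} Xᵢ) + dim(Σ_{i∉I} Xᵢ) - dim(X₁ + ⋯ + X_k) ≤ r. Then there exists a subspace A of dimension at most 3r such that Σ_{i=1}^{k} (dim Xᵢ - dim(Xᵢ ∩ A)) ≤ dim(X₁ + ⋯ + X_k). -/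
/-!
Write `X_S = ⨆ i ∈ S, X i` and let `D S = ∑ i ∈ S, dim X i - dim X_S` be the deficiency of `S`.
Choose `I` minimising `D I + D Iᶜ` and put `A₀ = X_I ⊓ X_Iᶜ`, so `dim A₀ ≤ r` by hypothesis.
Adding the members of `I` one at a time shows `D I ≤ ∑ i ∈ I, dim (X i ⊓ X_{I \ {i}})`, and
moving `i` from `I` to `Iᶜ` shows, by minimality, that
`dim (X i ⊓ X_{I \ {i}}) ≤ dim (X i ⊓ X_Iᶜ) = dim (X i ⊓ A₀)`.
Hence `∑ i, dim (X i ⊓ A₀) ≥ D I + D Iᶜ`, i.e. `∑ i, dim (X i / A₀) ≤ dim X_I + dim X_Iᶜ`,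
which is `dim (⨆ i, X i) + dim A₀`. Finally, enlarging `A₀` by one vector of some `X i ⊄ A₀` at a
time lowers the sum by at least one per step, so `dim A₀` more vectors suffice: `dim A ≤ 2r`.
-/

open Module Finset

theorem Finset.biSup_sup_biSup_compl {ι α : Type*} [CompleteLattice α] [Fintype ι] [DecidableEq ι]
    (f : ι → α) (I : Finset ι) : (⨆ i ∈ I, f i) ⊔ (⨆ i ∈ Iᶜ, f i) = ⨆ i, f i := by
  simp only [mem_compl]
  exact (iSup_split f (· ∈ I)).symm

namespace Submodule

variable {ι F V : Type*} [Field F] [AddCommGroup V] [Module F V] (X : ι → Submodule F V)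

noncomputable def deficiency (S : Finset ι) : ℤ :=
  ∑ i ∈ S, (finrank F (X i) : ℤ) - finrank F ↥(⨆ i ∈ S, X i)

noncomputable def sumFinrankQuot [Fintype ι] (A : Submodule F V) : ℤ :=
  ∑ i, ((finrank F ↥(X i) : ℤ) - finrank F ↥(X i ⊓ A))

variable [FiniteDimensional F V]

section Deficiency

variable [DecidableEq ι]

theorem deficiency_insert {i : ι} {S : Finset ι} (hi : i ∉ S) :
    deficiency X (insert i S) = deficiency X S + finrank F ↥(X i ⊓ ⨆ j ∈ S, X j) := by
  have h := finrank_sup_add_finrank_inf_eq (X i) (⨆ j ∈ S, X j)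
  rw [deficiency, deficiency, sum_insert hi, Finset.iSup_insert]
  omega

theorem deficiency_le_sum_finrank_inf (S : Finset ι) :
    deficiency X S ≤ ∑ i ∈ S, (finrank F ↥(X i ⊓ ⨆ j ∈ S.erase i, X j) : ℤ) := by
  induction S using Finset.induction_on with
  | empty => simp [deficiency]
  | @insert a S ha ih =>
    rw [deficiency_insert X ha, sum_insert ha, erase_insert ha]
    have hmono : ∀ i ∈ S, (finrank F ↥(X i ⊓ ⨆ j ∈ S.erase i, X j) : ℤ) ≤
        finrank F ↥(X i ⊓ ⨆ j ∈ (insert a S).erase i, X j) := fun i _ => by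
      exact_mod_cast finrank_mono (inf_le_inf_left _ (biSup_mono fun j (hj : j ∈ S.erase i) =>
        erase_subset_erase i (subset_insert a S) hj))
    linarith [sum_le_sum hmono]

variable [Fintype ι]

/-- Moving `i` from `I` to `Iᶜ` changes `D I + D Iᶜ` by the difference of these two overlaps. -/
theorem finrank_inf_erase_le_finrank_inf_compl {I : Finset ι}
    (hmin : ∀ J, deficiency X I + deficiency X Iᶜ ≤ deficiency X J + deficiency X Jᶜ)
    {i : ι} (hi : i ∈ I) :
    finrank F ↥(X i ⊓ ⨆ j ∈ I.erase i, X j) ≤ finrank F ↥(X i ⊓ ⨆ j ∈ Iᶜ, X j) := by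
  have hI := deficiency_insert X (notMem_erase i I)
  have hIc := deficiency_insert X (S := Iᶜ) (i := i) (by simp [hi])
  rw [insert_erase hi] at hI
  rw [← compl_erase] at hIc
  have := hmin (I.erase i)
  omega

theorem deficiency_le_sum_finrank_inf_biSup_inf_biSup_compl {I : Finset ι}
    (hmin : ∀ J, deficiency X I + deficiency X Iᶜ ≤ deficiency X J + deficiency X Jᶜ) :
    deficiency X I ≤
      ∑ i ∈ I, (finrank F ↥(X i ⊓ ((⨆ j ∈ I, X j) ⊓ ⨆ j ∈ Iᶜ, X j)) : ℤ) := by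
  refine (deficiency_le_sum_finrank_inf X I).trans (sum_le_sum fun i hi => ?_)
  rw [← inf_assoc, inf_eq_left.mpr (le_iSup₂ (f := fun j (_ : j ∈ I) => X j) i hi)]
  exact_mod_cast finrank_inf_erase_le_finrank_inf_compl X hmin hi

theorem sumFinrankQuot_biSup_inf_biSup_compl_le {I : Finset ι}
    (hmin : ∀ J, deficiency X I + deficiency X Iᶜ ≤ deficiency X J + deficiency X Jᶜ) :
    sumFinrankQuot X ((⨆ j ∈ I, X j) ⊓ ⨆ j ∈ Iᶜ, X j) ≤
      finrank F ↥(⨆ i, X i) + finrank F ↥((⨆ j ∈ I, X j) ⊓ ⨆ j ∈ Iᶜ, X j) := by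
  have hmin' : ∀ J, deficiency X Iᶜ + deficiency X Iᶜᶜ ≤ deficiency X J + deficiency X Jᶜ := by
    simpa only [compl_compl, add_comm (deficiency X I)] using hmin
  have hI := deficiency_le_sum_finrank_inf_biSup_inf_biSup_compl X hmin
  have hIc := deficiency_le_sum_finrank_inf_biSup_inf_biSup_compl X hmin'
  rw [compl_compl, inf_comm (⨆ j ∈ Iᶜ, X j)] at hIc
  have hdim := finrank_sup_add_finrank_inf_eq (⨆ j ∈ I, X j) (⨆ j ∈ Iᶜ, X j)
  rw [biSup_sup_biSup_compl] at hdim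
  simp only [deficiency, sumFinrankQuot, sum_sub_distrib] at hI hIc ⊢
  rw [← sum_add_sum_compl I, ← sum_add_sum_compl I]
  omega

end Deficiency

section Padding

variable [Fintype ι]

theorem exists_finrank_le_succ_sumFinrankQuot_lt {A : Submodule F V}
    (hpos : 0 < sumFinrankQuot X A) :
    ∃ B : Submodule F V,
      finrank F B ≤ finrank F A + 1 ∧ sumFinrankQuot X B < sumFinrankQuot X A := by
  rw [sumFinrankQuot, sum_sub_distrib, sub_pos] at hpos
  obtain ⟨i, -, hi⟩ := exists_lt_of_sum_lt hpos
  obtain ⟨v, hvX, hvA⟩ : ∃ v ∈ X i, v ∉ A := by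
    refine SetLike.not_le_iff_exists.mp fun hle => ?_
    rw [inf_eq_left.mpr hle] at hi
    exact lt_irrefl _ hi
  have hv0 : v ≠ 0 := fun h => hvA (h ▸ A.zero_mem)
  refine ⟨A ⊔ span F {v}, ?_, sum_lt_sum (fun j _ => ?_) ⟨i, mem_univ i, ?_⟩⟩
  · simpa [finrank_span_singleton hv0] using finrank_add_le_finrank_add_finrank A (span F {v})
  · have := finrank_mono (inf_le_inf_left (X j) (le_sup_left : A ≤ A ⊔ span F {v}))
    omega
  · have hlt : X i ⊓ A < X i ⊓ (A ⊔ span F {v}) :=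
      SetLike.lt_iff_le_and_exists.mpr ⟨inf_le_inf_left _ le_sup_left, v,
        mem_inf.mpr ⟨hvX, mem_sup_right (mem_span_singleton_self v)⟩, fun h => hvA (mem_inf.mp h).2⟩
    have := finrank_lt_finrank_of_lt hlt
    omega

theorem exists_finrank_le_add_sumFinrankQuot_le (n : ℕ) {A : Submodule F V}
    (hA : sumFinrankQuot X A ≤ finrank F ↥(⨆ i, X i) + n) :
    ∃ B : Submodule F V, finrank F B ≤ finrank F A + n ∧
      sumFinrankQuot X B ≤ finrank F ↥(⨆ i, X i) := by
  induction n generalizing A with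
  | zero => exact ⟨A, le_rfl, by simpa using hA⟩
  | succ n ih =>
    by_cases hle : sumFinrankQuot X A ≤ finrank F ↥(⨆ i, X i)
    · exact ⟨A, by omega, hle⟩
    obtain ⟨A', hA'dim, hA'lt⟩ := exists_finrank_le_succ_sumFinrankQuot_lt X (A := A) (by omega)
    obtain ⟨B, hBdim, hB⟩ := ih (A := A') (by push_cast at hA; omega)
    exact ⟨B, by omega, hB⟩

end Padding

end Submodule

open Submodule in
theorem stmt4 {F V : Type*} [Field F] [AddCommGroup V] [Module F V]
    [FiniteDimensional F V] {k : ℕ} (X : Fin k → Submodule F V) (r : ℕ)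
    (h : ∀ I : Finset (Fin k),
      (finrank F ↥(⨆ i ∈ I, X i) : ℤ) + finrank F ↥(⨆ i ∈ Iᶜ, X i)
          - finrank F ↥(⨆ i, X i) ≤ r) :
    ∃ A : Submodule F V, finrank F A ≤ 3 * r ∧
      ∑ i, ((finrank F ↥(X i) : ℤ) - finrank F ↥(X i ⊓ A))
        ≤ finrank F ↥(⨆ i, X i) := by
  obtain ⟨I, hmin⟩ := Finite.exists_min fun J : Finset (Fin k) => deficiency X J + deficiency X Jᶜ
  have hA₀ : finrank F ↥((⨆ j ∈ I, X j) ⊓ ⨆ j ∈ Iᶜ, X j) ≤ r := by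
    have hdim := finrank_sup_add_finrank_inf_eq (⨆ j ∈ I, X j) (⨆ j ∈ Iᶜ, X j)
    rw [biSup_sup_biSup_compl] at hdim
    have := h I
    omega
  obtain ⟨B, hBdim, hB⟩ := exists_finrank_le_add_sumFinrankQuot_le X _
    (sumFinrankQuot_biSup_inf_biSup_compl_le X hmin)
  exact ⟨B, by omega, hB⟩
end

section
/- Branch-depth of a matroid is at most its contraction-deletion-depth: for every matroid M, bd(M) ≤ cdd(M), where contracting or deleting a single element decreases the relevant connectivity by at most one at each level. -/
/-- The rank of a set in a matroid: the largest cardinality of an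
independent subset. -/
noncomputable def mrank {α : Type*} (M : Matroid α) (X : Set α) : ℕ :=
  sSup {n : ℕ | ∃ I, I ⊆ X ∧ M.Indep I ∧ I.ncard = n}

/-- The two-parameter connectivity function λ_M(X, Y) = r(X) + r(Y) - r(X ∪ Y). -/
noncomputable def mlambda {α : Type*} (M : Matroid α) (X Y : Set α) : ℤ :=
  (mrank M X : ℤ) + mrank M Y - mrank M (X ∪ Y)

/-- `a` and `b` are both different from `v` and connected in the graph `G - v`. -/
def offRel {V : Type*} (G : SimpleGraph V) (v a b : V) : Prop :=
  ∃ (ha : a ≠ v) (hb : b ≠ v),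
    (G.comap (Subtype.val : {x : V // x ≠ v} → V)).Reachable ⟨a, ha⟩ ⟨b, hb⟩

/-- `S` is a union of connected components of the graph `G - v`. -/
def UnionOfParts {V : Type*} (G : SimpleGraph V) (v : V) (S : Set V) : Prop :=
  v ∉ S ∧ ∀ a ∈ S, ∀ b, offRel G v a b → b ∈ S

/-- A vertex with at most one neighbour. -/
def IsLeaf {V : Type*} (G : SimpleGraph V) (v : V) : Prop :=
  ∀ u w, G.Adj v u → G.Adj v w → u = w

/-- A `(d,r)`-decomposition of a matroid `M`: a tree of radius `d` whose leaves are
bijectively labelled by the elements of `M` such that for every inner vertex `v` and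
every union `S` of components of `T - v`, the connectivity of the set of elements
labelling leaves in `S` is at most `r` (this is equivalent to `λ*` of the partition
given by the components of `T - v` being at most `r`). -/
structure Decomp {α : Type*} (M : Matroid α) (d r : ℕ) where
  V : Type
  fin : Fintype V
  G : SimpleGraph V
  tree : G.IsTree
  center : V
  radius_le : ∀ v, G.dist center v ≤ d
  radius_ge : ∀ w : V, ∃ v, d ≤ G.dist w v
  label : V → α
  label_mem : ∀ v, IsLeaf G v → label v ∈ M.E
  label_inj : ∀ v w, IsLeaf G v → IsLeaf G w → label v = label w → v = w
  label_surj : ∀ e ∈ M.E, ∃ v, IsLeaf G v ∧ label v = e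
  conn : ∀ v, ¬ IsLeaf G v → ∀ S : Set V, UnionOfParts G v S →
    mlambda M (label '' {u ∈ S | IsLeaf G u})
      (M.E \ label '' {u ∈ S | IsLeaf G u}) ≤ r

/-- `bd(M) ≤ k`: the matroid `M` admits a `(d,r)`-decomposition with `d ≤ k`, `r ≤ k`. -/
def HasBranchDepthLE {α : Type*} (M : Matroid α) (k : ℕ) : Prop :=
  ∃ d r, d ≤ k ∧ r ≤ k ∧ Nonempty (Decomp M d r)

/-- A circuit: a minimal dependent set. -/
def IsCircuit {α : Type*} (M : Matroid α) (C : Set α) : Prop :=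
  C ⊆ M.E ∧ ¬ M.Indep C ∧ ∀ D ⊂ C, M.Indep D

/-- Two elements are connected if they are equal or lie on a common circuit. -/
def ConnTo {α : Type*} (M : Matroid α) (e f : α) : Prop :=
  e = f ∨ ∃ C, IsCircuit M C ∧ e ∈ C ∧ f ∈ C

/-- The component of an element `e` of a matroid. -/
def component {α : Type*} (M : Matroid α) (e : α) : Set α :=
  {f ∈ M.E | ConnTo M e f}

/-- A matroid is connected if any two of its elements lie on a common circuit. -/
def MConnected {α : Type*} (M : Matroid α) : Prop :=
  M.E.Nonempty ∧ ∀ e ∈ M.E, ∀ f ∈ M.E, ConnTo M e f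

/-- `N` is obtained from `M` by contracting the (non-loop) element `e`. -/
def ContractElem {α : Type*} (M N : Matroid α) (e : α) : Prop :=
  N.E = M.E \ {e} ∧ ∀ I, N.Indep I ↔ I ⊆ M.E \ {e} ∧ M.Indep (insert e I)

/-- `CddLE M d` means that the contraction-deletion-depth of `M` is at most `d`:
a single-element matroid has depth `1`; the depth of a disconnected matroid is the
maximum depth of its components; and otherwise one may contract a non-loop element
or delete an element at the cost of one level. -/
inductive CddLE {α : Type*} : Matroid α → ℕ → Prop where
  | single (M : Matroid α) (e : α) (d : ℕ) : M.E = {e} → 1 ≤ d → CddLE M d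
  | disconn (M : Matroid α) (d : ℕ) : M.E.Nonempty → ¬ MConnected M →
      (∀ e ∈ M.E, CddLE (M.restrict (component M e)) d) → CddLE M d
  | contr (M N : Matroid α) (e : α) (d : ℕ) : e ∈ M.E → M.Indep {e} →
      ContractElem M N e → CddLE N d → CddLE M (d + 1)
  | del (M : Matroid α) (e : α) (d : ℕ) : e ∈ M.E →
      CddLE (M.restrict (M.E \ {e})) d → CddLE M (d + 1)


/-!
Induct on the derivation of `cdd(M) ≤ d`, building a decomposition whose tree is rooted, has height
at most `d` (at most `d - 1` when `M` is connected) and whose cuts have connectivity at most `d`.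
A single element is a one-vertex tree. Deleting or contracting `e` changes every connectivity by at
most one, so a leaf labelled `e` attached to the root of the tree of the minor works (when that tree
is a single vertex, `M` has two elements and a star works). For a disconnected matroid, the trees of
its components are hung below a new root: a union of components has connectivity `0`, and adding
whole components to a subset of another component does not change its connectivity. Re-centring at
a vertex of minimum eccentricity turns the height into a radius.
-/

namespace BranchDepth

open Set Matroid

section Rank

variable {α : Type*} {M N : Matroid α} {X Y U : Set α} {e : α}

lemma mrank_eq_eRk (M : Matroid α) [M.Finite] (X : Set α) : (mrank M X : ℕ∞) = M.eRk X := by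
  set S := {n : ℕ | ∃ I, I ⊆ X ∧ M.Indep I ∧ I.ncard = n}
  have hbdd : BddAbove S :=
    ⟨M.E.ncard, by rintro _ ⟨I, -, hI, rfl⟩; exact ncard_le_ncard hI.subset_ground M.ground_finite⟩
  have hfin : ∀ {I}, M.Indep I → (I.ncard : ℕ∞) = I.encard :=
    fun hI ↦ (M.ground_finite.subset hI.subset_ground).cast_ncard_eq
  refine le_antisymm ?_ (eRk_le_iff.2 fun I hIX hI ↦ ?_)
  · obtain ⟨I, hIX, hI, hcard⟩ : sSup S ∈ S :=
      Nat.sSup_mem ⟨0, ∅, empty_subset _, M.empty_indep, by simp⟩ hbdd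
    rw [mrank, ← hcard, hfin hI]
    exact hI.encard_le_eRk_of_subset hIX
  · rw [← hfin hI, Nat.cast_le]
    exact le_csSup hbdd ⟨I, hIX, hI, rfl⟩

lemma mrank_mono [M.Finite] (h : X ⊆ Y) : mrank M X ≤ mrank M Y := by
  rw [← Nat.cast_le (α := ℕ∞), mrank_eq_eRk, mrank_eq_eRk]
  exact M.eRk_mono h

lemma mrank_insert_le [M.Finite] (e : α) (X : Set α) : mrank M (insert e X) ≤ mrank M X + 1 := by
  rw [← Nat.cast_le (α := ℕ∞), Nat.cast_add, mrank_eq_eRk, mrank_eq_eRk, Nat.cast_one]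
  exact M.eRk_insert_le_add_one e X

lemma mrank_le_ncard [M.Finite] (hX : X ⊆ M.E) : mrank M X ≤ X.ncard := by
  rw [← Nat.cast_le (α := ℕ∞), mrank_eq_eRk, (M.ground_finite.subset hX).cast_ncard_eq]
  exact M.eRk_le_encard X

lemma mrank_restrict (hXU : X ⊆ U) : mrank (M ↾ U) X = mrank M X := by
  unfold mrank
  congr 1; ext n
  refine exists_congr fun I ↦ and_congr_right fun hIX ↦ ?_
  rw [restrict_indep_iff, and_iff_left (hIX.trans hXU)]

lemma eRk_insert_of_contractElem (hce : ContractElem M N e) (he : M.Indep {e}) :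
    M.eRk (insert e Y) = N.eRk Y + 1 := by
  obtain ⟨I, hI⟩ := N.exists_isBasis' Y
  obtain ⟨hIE, hIe⟩ := (hce.2 I).1 hI.indep
  obtain ⟨J, hJ, heJ⟩ := he.subset_isBasis'_of_subset (singleton_subset_iff.2 (mem_insert e Y))
  have heJ' : e ∈ J := heJ rfl
  have hJe : N.Indep (J \ {e}) := (hce.2 _).2
    ⟨sdiff_subset_sdiff_left hJ.indep.subset_ground,
      by rw [insert_sdiff_singleton, insert_eq_of_mem heJ']; exact hJ.indep⟩
  refine le_antisymm ?_ ?_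
  · rw [hJ.eRk_eq_encard, ← encard_sdiff_singleton_add_one heJ']
    gcongr
    exact hJe.encard_le_eRk_of_subset (sdiff_singleton_subset_iff.2 hJ.subset)
  · rw [← hI.encard_eq_eRk, ← encard_insert_of_notMem fun h ↦ (hIE h).2 rfl]
    exact hIe.encard_le_eRk_of_subset (insert_subset_insert hI.subset)

lemma contractElem_finite [M.Finite] (hce : ContractElem M N e) : N.Finite :=
  ⟨hce.1 ▸ M.ground_finite.sdiff⟩

lemma mrank_insert_of_contractElem [M.Finite] (hce : ContractElem M N e) (he : M.Indep {e}) :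
    mrank M (insert e Y) = mrank N Y + 1 := by
  have := contractElem_finite hce
  rw [← Nat.cast_inj (R := ℕ∞), Nat.cast_add, mrank_eq_eRk, mrank_eq_eRk, Nat.cast_one]
  exact eRk_insert_of_contractElem hce he

end Rank

/-- The connectivity function `λ_M` of the paper. -/
noncomputable def lam (M : Matroid α) (X : Set α) : ℤ := mlambda M X (M.E \ X)

section Connectivity

variable {α : Type*} {M N : Matroid α} {X : Set α} {e : α}

lemma lam_eq (hX : X ⊆ M.E) :
    lam M X = mrank M X + mrank M (M.E \ X) - mrank M M.E := by
  rw [lam, mlambda, union_sdiff_cancel hX]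

lemma ground_sdiff_eq_of_eq_sdiff_singleton {E F : Set α} (he : e ∈ E) (hF : F = E \ {e})
    (hX : X ⊆ F) : E = insert e F ∧ E \ X = insert e (F \ X) ∧ E \ insert e X = F \ X := by
  subst hF
  have heX : e ∉ X := fun h ↦ (hX h).2 rfl
  refine ⟨by simp [he], ?_, ?_⟩ <;> ext x <;> by_cases hx : x = e <;> simp_all

lemma lam_le_of_contractElem [M.Finite] (hce : ContractElem M N e) (he : M.Indep {e})
    (hX : X ⊆ N.E) : lam M X ≤ lam N X + 1 ∧ lam M (insert e X) ≤ lam N X + 1 := by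
  have := contractElem_finite hce
  obtain ⟨hE, hXc, heXc⟩ := ground_sdiff_eq_of_eq_sdiff_singleton (he.subset_ground rfl) hce.1 hX
  have hr := fun Y ↦ mrank_insert_of_contractElem (Y := Y) hce he
  have h1 : mrank M X ≤ mrank N X + 1 := (mrank_mono (subset_insert e X)).trans (hr X).le
  have h2 : mrank M (N.E \ X) ≤ mrank N (N.E \ X) + 1 :=
    (mrank_mono (subset_insert e _)).trans (hr _).le
  rw [lam_eq (hX.trans (hE ▸ subset_insert _ _)), lam_eq (insert_subset_insert hX |>.trans hE.ge),
    lam_eq hX, hXc, heXc, hE]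
  have := hr X; have := hr (N.E \ X); have := hr N.E
  omega

lemma lam_le_of_delete [M.Finite] (he : e ∈ M.E) (hX : X ⊆ M.E \ {e}) :
    lam M X ≤ lam (M ↾ (M.E \ {e})) X + 1 ∧
      lam M (insert e X) ≤ lam (M ↾ (M.E \ {e})) X + 1 := by
  obtain ⟨hE, hXc, heXc⟩ := ground_sdiff_eq_of_eq_sdiff_singleton he rfl hX
  rw [lam_eq (hX.trans sdiff_subset), lam_eq (insert_subset he (hX.trans sdiff_subset)),
    lam_eq (M := M ↾ _) hX, restrict_ground_eq, mrank_restrict hX, mrank_restrict sdiff_subset,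
    mrank_restrict subset_rfl, hXc, heXc]
  have := mrank_insert_le (M := M) e X
  have := mrank_insert_le (M := M) e ((M.E \ {e}) \ X)
  have := mrank_mono (M := M) (sdiff_subset : M.E \ {e} ⊆ M.E)
  omega

lemma lam_le_one_of_ground_eq_pair [M.Finite] {f : α} (hE : M.E = {e, f}) (hX : X ⊆ M.E) :
    lam M X ≤ 1 := by
  have h2 : M.E.ncard ≤ 2 := hE ▸ (ncard_insert_le e {f}).trans (by simp)
  have := ncard_sdiff_add_ncard_of_subset hX M.ground_finite
  have := mrank_le_ncard hX
  have := mrank_le_ncard (M := M) (X := M.E \ X) sdiff_subset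
  have := mrank_mono (M := M) hX
  have := mrank_mono (M := M) (sdiff_subset : M.E \ X ⊆ M.E)
  rw [lam_eq hX]
  omega

end Connectivity

def IsSeparator (M : Matroid α) (X : Set α) : Prop :=
  ∀ C, M.IsCircuit C → C ⊆ X ∨ Disjoint C X

section Separator

variable {α : Type*} {M : Matroid α} {U X Y A B I J : Set α}

lemma IsSeparator.indep_union (hU : IsSeparator M U) (hI : M.Indep I) (hIU : I ⊆ U)
    (hJ : M.Indep J) (hJU : Disjoint J U) : M.Indep (I ∪ J) := by
  rw [indep_iff_forall_subset_not_isCircuit (union_subset hI.subset_ground hJ.subset_ground)]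
  intro C hCIJ hC
  rcases hU C hC with hCU | hCU
  · exact hC.not_indep (hI.subset fun x hx ↦ (hCIJ hx).resolve_right
      fun hxJ ↦ hJU.notMem_of_mem_left hxJ (hCU hx))
  · exact hC.not_indep (hJ.subset fun x hx ↦ (hCIJ hx).resolve_left
      fun hxI ↦ hCU.notMem_of_mem_left hx (hIU hxI))

lemma IsSeparator.eRk_union (hU : IsSeparator M U) (hAU : A ⊆ U) (hBU : Disjoint B U) :
    M.eRk (A ∪ B) = M.eRk A + M.eRk B := by
  refine le_antisymm (M.eRk_union_le_eRk_add_eRk A B) ?_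
  obtain ⟨I, hI⟩ := M.exists_isBasis' A
  obtain ⟨J, hJ⟩ := M.exists_isBasis' B
  have hJU : Disjoint J U := hBU.mono_left hJ.subset
  rw [← hI.encard_eq_eRk, ← hJ.encard_eq_eRk,
    ← encard_union_eq (hJU.symm.mono_left (hI.subset.trans hAU))]
  exact (hU.indep_union hI.indep (hI.subset.trans hAU) hJ.indep hJU).encard_le_eRk_of_subset
    (union_subset_union hI.subset hJ.subset)

lemma IsSeparator.mrank_union [M.Finite] (hU : IsSeparator M U) (hAU : A ⊆ U)
    (hBU : Disjoint B U) : mrank M (A ∪ B) = mrank M A + mrank M B := by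
  rw [← Nat.cast_inj (R := ℕ∞), Nat.cast_add, mrank_eq_eRk, mrank_eq_eRk, mrank_eq_eRk]
  exact hU.eRk_union hAU hBU

lemma isSeparator_biUnion {ι : Type*} {P : ι → Set α} {K : Set ι}
    (h : ∀ k ∈ K, IsSeparator M (P k)) : IsSeparator M (⋃ k ∈ K, P k) := by
  intro C hC
  by_cases hmeet : ∃ k ∈ K, ¬ Disjoint C (P k)
  · obtain ⟨k, hk, hCk⟩ := hmeet
    exact .inl (((h k hk C hC).resolve_right hCk).trans (subset_biUnion_of_mem hk))
  · push Not at hmeet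
    exact .inr (disjoint_iUnion₂_right.2 hmeet)

lemma IsSeparator.lam_eq_zero [M.Finite] (hU : IsSeparator M U) (hUE : U ⊆ M.E) :
    lam M U = 0 := by
  have := hU.mrank_union subset_rfl (disjoint_sdiff_left : Disjoint (M.E \ U) U)
  rw [union_sdiff_cancel hUE] at this
  rw [lam_eq hUE, this]
  omega

lemma IsSeparator.lam_union [M.Finite] (hU : IsSeparator M U) (hUE : U ⊆ M.E)
    (hY : IsSeparator M Y) (hYE : Y ⊆ M.E) (hYU : Disjoint Y U) (hXU : X ⊆ U) :
    lam M (X ∪ Y) = lam (M ↾ U) X := by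
  have hcompl : M.E \ (X ∪ Y) = (U \ X) ∪ ((M.E \ U) \ Y) := by
    ext x
    have := @hUE x; have := @hXU x
    by_cases hx : x ∈ U <;> simp_all [hYU.notMem_of_mem_right]
  have hYcompl : Y ⊆ M.E \ U := subset_sdiff.2 ⟨hYE, hYU⟩
  have h1 := hU.mrank_union hXU hYU
  have h2 := hU.mrank_union (A := U \ X) (B := (M.E \ U) \ Y) sdiff_subset
    (disjoint_sdiff_left.mono_left sdiff_subset)
  have h3 := hU.mrank_union subset_rfl (disjoint_sdiff_left : Disjoint (M.E \ U) U)
  have h4 := hY.mrank_union subset_rfl (disjoint_sdiff_left : Disjoint ((M.E \ U) \ Y) Y)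
  rw [union_sdiff_cancel hUE] at h3
  rw [union_sdiff_cancel hYcompl] at h4
  rw [lam_eq (union_subset (hXU.trans hUE) hYE), lam_eq (M := M ↾ U) hXU, restrict_ground_eq,
    mrank_restrict hXU, mrank_restrict sdiff_subset, mrank_restrict subset_rfl, hcompl, h1, h2, h3,
    h4]
  omega

end Separator

section Components

variable {α : Type*} {M : Matroid α} {C C₁ C₂ : Set α} {e f g : α}

lemma isCircuit_iff_matroid_isCircuit : _root_.IsCircuit M C ↔ M.IsCircuit C := by
  rw [isCircuit_iff_forall_ssubset, Dep, _root_.IsCircuit]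
  tauto

lemma connTo_iff : ConnTo M e f ↔ e = f ∨ ∃ C, M.IsCircuit C ∧ e ∈ C ∧ f ∈ C := by
  simp only [ConnTo, isCircuit_iff_matroid_isCircuit]

lemma exists_isCircuit_mem_mem [M.Finite] (hC₁ : M.IsCircuit C₁) (hC₂ : M.IsCircuit C₂)
    (he : e ∈ C₁) (hg : g ∈ C₂) (hf : f ∈ C₁ ∩ C₂) : ∃ C, M.IsCircuit C ∧ e ∈ C ∧ g ∈ C := by
  -- Two strong eliminations give a pair of circuits as in the hypotheses with a smaller union.
  induction hn : (C₁ ∪ C₂).ncard using Nat.strong_induction_on generalizing C₁ C₂ f with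
  | _ n ih =>
  have hfin : (C₁ ∪ C₂).Finite := M.ground_finite.subset (union_subset hC₁.subset_ground
    hC₂.subset_ground)
  by_cases hgC₁ : g ∈ C₁
  · exact ⟨C₁, hC₁, he, hgC₁⟩
  by_cases heC₂ : e ∈ C₂
  · exact ⟨C₂, hC₂, heC₂, hg⟩
  obtain ⟨C₃, hC₃s, hC₃, heC₃⟩ := hC₁.strong_elimination hC₂ hf.1 hf.2 he heC₂
  by_cases hgC₃ : g ∈ C₃
  · exact ⟨C₃, hC₃, heC₃, hgC₃⟩
  have hC₃C₁ : ¬ C₃ ⊆ C₁ := fun hss ↦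
    (hC₃s (hC₃.eq_of_subset_isCircuit hC₁ hss ▸ hf.1)).2 rfl
  obtain ⟨h, hhC₃, hhC₁⟩ := not_subset.1 hC₃C₁
  have hhC₂ : h ∈ C₂ := ((hC₃s hhC₃).1).resolve_left hhC₁
  obtain ⟨C₄, hC₄s, hC₄, hgC₄⟩ := hC₂.strong_elimination hC₃ hhC₂ hhC₃ hg hgC₃
  have hC₄sub : C₄ ⊆ C₁ ∪ C₂ := hC₄s.trans <| sdiff_subset.trans <|
    union_subset subset_union_right (hC₃s.trans sdiff_subset)
  by_cases hfC₄ : f ∈ C₄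
  · refine ih _ ?_ hC₁ hC₄ he hgC₄ ⟨hf.1, hfC₄⟩ rfl
    exact hn ▸ ncard_lt_ncard ((union_subset subset_union_left hC₄sub).ssubset_of_mem_notMem
      (.inr hhC₂) (by rintro (h' | h'); exacts [hhC₁ h', (hC₄s h').2 rfl])) hfin
  · obtain ⟨w, hwC₃, hwC₄⟩ : (C₃ ∩ C₄).Nonempty := by
      rw [nonempty_iff_ne_empty]
      intro hdisj
      have : C₄ ⊆ C₂ := fun x hx ↦ ((hC₄s hx).1).resolve_right
        fun hxC₃ ↦ (hdisj.subset ⟨hxC₃, hx⟩ : x ∈ (∅ : Set α))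
      exact (hC₄s (hC₄.eq_of_subset_isCircuit hC₂ this ▸ hhC₂)).2 rfl
    refine ih _ ?_ hC₃ hC₄ heC₃ hgC₄ ⟨hwC₃, hwC₄⟩ rfl
    exact hn ▸ ncard_lt_ncard ((union_subset (hC₃s.trans sdiff_subset) hC₄sub).ssubset_of_mem_notMem
      (.inl hf.1) (by rintro (h' | h'); exacts [(hC₃s h').2 rfl, hfC₄ h'])) hfin

lemma connTo_symm (h : ConnTo M e f) : ConnTo M f e := by
  rw [connTo_iff] at h ⊢
  obtain rfl | ⟨C, hC, he, hf⟩ := h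
  exacts [.inl rfl, .inr ⟨C, hC, hf, he⟩]

lemma connTo_trans [M.Finite] (h₁ : ConnTo M e f) (h₂ : ConnTo M f g) : ConnTo M e g := by
  rw [connTo_iff] at h₁ h₂ ⊢
  obtain rfl | ⟨C₁, hC₁, he, hf₁⟩ := h₁
  · exact h₂
  obtain rfl | ⟨C₂, hC₂, hf₂, hg⟩ := h₂
  · exact .inr ⟨C₁, hC₁, he, hf₁⟩
  exact .inr (exists_isCircuit_mem_mem hC₁ hC₂ he hg ⟨hf₁, hf₂⟩)

lemma mem_component_self (he : e ∈ M.E) : e ∈ component M e := ⟨he, .inl rfl⟩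

lemma component_subset_ground : component M e ⊆ M.E := fun _ h ↦ h.1

lemma component_eq_of_mem [M.Finite] (hf : f ∈ component M e) : component M f = component M e :=
  ext fun _ ↦ ⟨fun h ↦ ⟨h.1, connTo_trans hf.2 h.2⟩,
    fun h ↦ ⟨h.1, connTo_trans (connTo_symm hf.2) h.2⟩⟩

lemma disjoint_component_of_ne [M.Finite] (h : component M e ≠ component M f) :
    Disjoint (component M e) (component M f) :=
  disjoint_left.2 fun _ hxe hxf ↦ h ((component_eq_of_mem hxe).symm.trans (component_eq_of_mem hxf))

lemma exists_component_ne_of_not_mconnected (hM : ¬ MConnected M) (hne : M.E.Nonempty) :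
    ∃ e ∈ M.E, ∃ f ∈ M.E, component M e ≠ component M f := by
  obtain ⟨e, he, f, hf, hef⟩ : ∃ e ∈ M.E, ∃ f ∈ M.E, ¬ ConnTo M e f := by
    by_contra! h
    exact hM ⟨hne, h⟩
  exact ⟨e, he, f, hf, fun h ↦ hef (h ▸ mem_component_self hf).2⟩

lemma isSeparator_component [M.Finite] : IsSeparator M (component M e) := by
  refine fun C hC ↦ or_iff_not_imp_right.2 fun hmeet ↦ ?_
  obtain ⟨a, haC, ha⟩ := not_disjoint_iff.1 hmeet
  exact fun c hc ↦ ⟨hC.subset_ground hc, connTo_trans ha.2 (connTo_iff.2 (.inr ⟨C, hC, haC, hc⟩))⟩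

lemma mconnected_restrict_component [M.Finite] (he : e ∈ M.E) :
    MConnected (M ↾ component M e) := by
  refine ⟨⟨e, mem_component_self he⟩, fun f hf g hg ↦ ?_⟩
  obtain rfl | ⟨C, hC, hfC, hgC⟩ := connTo_iff.1 (connTo_trans (connTo_symm hf.2) hg.2)
  · exact .inl rfl
  have hCe : C ⊆ component M e :=
    (isSeparator_component C hC).resolve_right (not_disjoint_iff.2 ⟨f, hfC, hf⟩)
  exact connTo_iff.2 (.inr ⟨C, (restrict_isCircuit_iff component_subset_ground).2 ⟨hC, hCe⟩,
    hfC, hgC⟩)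

end Components

section ParentTree

variable {V W : Type*}

def parentGraph (par : V → V) : SimpleGraph V := SimpleGraph.fromRel fun u v ↦ par u = v

structure IsParentTree (par : V → V) (root : V) : Prop where
  eq_self_iff : ∀ v, par v = v ↔ v = root
  exists_iterate_eq : ∀ v, ∃ n, par^[n] v = root

def parentGraphEmbedding {par : V → V} {par' : W → W} (f : V ↪ W)
    (hf : ∀ u w, u ≠ w → (par' (f u) = f w ↔ par u = w)) :
    parentGraph par ↪g parentGraph par' where
  __ := f
  map_rel_iff' {u w} := by
    simp only [parentGraph, SimpleGraph.fromRel_adj, f.injective.ne_iff]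
    exact and_congr_right fun hne ↦ or_congr (hf u w hne) (hf w u hne.symm)

def descendants (par : V → V) (u : V) : Set V := {w | ∃ n, par^[n] w = u}

section Descendants

variable {par : V → V} {u w : V}

lemma mem_descendants_self : u ∈ descendants par u := ⟨0, rfl⟩

lemma par_mem_descendants (hw : w ∈ descendants par u) (hwu : w ≠ u) :
    par w ∈ descendants par u := by
  obtain ⟨_ | n, hn⟩ := hw
  · exact absurd hn hwu
  · exact ⟨n, hn⟩

lemma mem_descendants_of_par (hw : par w ∈ descendants par u) : w ∈ descendants par u :=
  let ⟨n, hn⟩ := hw; ⟨n + 1, hn⟩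

end Descendants

namespace IsParentTree

variable {par : V → V} {root u v : V} {n m : ℕ}

lemma par_root (h : IsParentTree par root) : par root = root := (h.eq_self_iff root).2 rfl

lemma iterate_eq_root_of_le (h : IsParentTree par root) (hn : par^[n] v = root) (hnm : n ≤ m) :
    par^[m] v = root := by
  obtain ⟨k, rfl⟩ := Nat.exists_eq_add_of_le hnm
  rw [Nat.add_comm, Function.iterate_add_apply, hn, Function.iterate_fixed h.par_root]

lemma eq_root_of_iterate_eq_self (h : IsParentTree par root) (hn : 0 < n) (hv : par^[n] v = v) :
    v = root := by
  obtain ⟨m, hm⟩ := h.exists_iterate_eq v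
  have hper : par^[n * m] v = v := by rw [Function.iterate_mul]; exact Function.iterate_fixed hv m
  rw [← hper]
  exact h.iterate_eq_root_of_le hm (Nat.le_mul_of_pos_left m hn)

lemma adj_par (h : IsParentTree par root) (hv : v ≠ root) : (parentGraph par).Adj v (par v) :=
  (SimpleGraph.fromRel_adj _ _ _).2 ⟨fun hpv ↦ hv ((h.eq_self_iff v).1 hpv.symm), .inl rfl⟩

lemma exists_walk_length_le (h : IsParentTree par root) (hn : par^[n] v = root) :
    ∃ p : (parentGraph par).Walk v root, p.length ≤ n := by
  induction n generalizing v with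
  | zero => subst hn; exact ⟨.nil, le_rfl⟩
  | succ n ih =>
    obtain ⟨p, hp⟩ := ih (v := par v) hn
    by_cases hv : v = root
    · subst hv; exact ⟨.nil, by simp⟩
    · exact ⟨.cons (h.adj_par hv) p, by simpa using hp⟩

lemma connected (h : IsParentTree par root) : (parentGraph par).Connected := by
  rw [SimpleGraph.connected_iff_exists_forall_reachable]
  refine ⟨root, fun v ↦ ?_⟩
  obtain ⟨n, hn⟩ := h.exists_iterate_eq v
  exact (h.exists_walk_length_le hn).elim fun p _ ↦ ⟨p.reverse⟩

lemma dist_le (h : IsParentTree par root) (hn : par^[n] v = root) :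
    (parentGraph par).dist root v ≤ n := by
  obtain ⟨p, hp⟩ := h.exists_walk_length_le hn
  exact (SimpleGraph.dist_comm).trans_le ((SimpleGraph.dist_le p).trans hp)

lemma par_notMem_descendants (h : IsParentTree par root) (hu : u ≠ root) :
    par u ∉ descendants par u := fun ⟨n, hn⟩ ↦ hu (h.eq_root_of_iterate_eq_self n.succ_pos hn)

lemma mem_descendants_iff_of_adj {a b : V}
    (hab : ((parentGraph par).deleteEdges {s(u, par u)}).Adj a b) :
    a ∈ descendants par u ↔ b ∈ descendants par u := by
  have key : ∀ a b, par a = b → s(a, b) ≠ s(u, par u) →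
      (a ∈ descendants par u ↔ b ∈ descendants par u) := by
    rintro a _ rfl hne
    have hau : a ≠ u := by rintro rfl; exact hne rfl
    exact ⟨fun ha ↦ par_mem_descendants ha hau, mem_descendants_of_par⟩
  simp only [parentGraph, SimpleGraph.deleteEdges_adj, SimpleGraph.fromRel_adj,
    Set.mem_singleton_iff] at hab
  obtain ⟨⟨-, hpar | hpar⟩, hedge⟩ := hab
  · exact key a b hpar hedge
  · exact (key b a hpar (by rwa [Sym2.eq_swap])).symm

lemma isBridge (h : IsParentTree par root) (hu : u ≠ root) :
    (parentGraph par).IsBridge s(u, par u) := by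
  have hwalk : ∀ {a b} (_ : ((parentGraph par).deleteEdges {s(u, par u)}).Walk a b),
      a ∈ descendants par u → b ∈ descendants par u := by
    intro a b p
    induction p with
    | nil => exact id
    | cons hadj _ ih => exact fun ha ↦ ih ((mem_descendants_iff_of_adj hadj).1 ha)
  exact SimpleGraph.isBridge_iff.2
    fun ⟨p⟩ ↦ h.par_notMem_descendants hu (hwalk p mem_descendants_self)

lemma isTree (h : IsParentTree par root) : (parentGraph par).IsTree := by
  refine ⟨h.connected, SimpleGraph.isAcyclic_iff_forall_adj_isBridge.2 fun a b hab ↦ ?_⟩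
  have hroot : ∀ {a b}, par a = b → a ≠ b → a ≠ root := by
    rintro a b rfl hab rfl; exact hab h.par_root.symm
  obtain ⟨hne, rfl | rfl⟩ := (SimpleGraph.fromRel_adj _ _ _).1 hab
  · exact h.isBridge (hroot rfl hne)
  · rw [Sym2.eq_swap]; exact h.isBridge (hroot rfl hne.symm)

end IsParentTree

end ParentTree

section Graph

variable {V W : Type*} {G : SimpleGraph V} {G' : SimpleGraph W} {v a b : V}

lemma _root_.IsLeaf.of_embedding (f : G ↪g G') (h : IsLeaf G' (f v)) : IsLeaf G v :=
  fun _ _ hu hw ↦ f.injective (h _ _ (f.map_adj_iff.2 hu) (f.map_adj_iff.2 hw))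

lemma _root_.IsLeaf.map (f : G ↪g G') (hv : IsLeaf G v)
    (hrange : ∀ x, G'.Adj (f v) x → x ∈ range f) : IsLeaf G' (f v) := by
  intro x y hx hy
  obtain ⟨u, rfl⟩ := hrange x hx
  obtain ⟨w, rfl⟩ := hrange y hy
  rw [hv u w (f.map_adj_iff.1 hx) (f.map_adj_iff.1 hy)]

lemma not_isLeaf_of_adj_of_adj (ha : G.Adj v a) (hb : G.Adj v b) (hab : a ≠ b) :
    ¬ IsLeaf G v :=
  fun h ↦ hab (h a b ha hb)

lemma _root_.offRel.map (f : G ↪g G') (h : offRel G v a b) : offRel G' (f v) (f a) (f b) := by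
  obtain ⟨ha, hb, hr⟩ := h
  let φ : G.comap (Subtype.val : {x // x ≠ v} → V) →g
      G'.comap (Subtype.val : {x // x ≠ f v} → W) :=
    ⟨fun u ↦ ⟨f u, f.injective.ne u.2⟩, f.map_adj_iff.2⟩
  exact ⟨f.injective.ne ha, f.injective.ne hb, hr.map φ⟩

lemma _root_.UnionOfParts.preimage (f : G ↪g G') {S : Set W} (hS : UnionOfParts G' (f v) S) :
    UnionOfParts G v (f ⁻¹' S) :=
  ⟨hS.1, fun _ ha _ hab ↦ hS.2 _ ha _ (hab.map f)⟩

lemma _root_.UnionOfParts.preimage_eq_empty_or_univ {v' : W} {S : Set W}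
    (hS : UnionOfParts G' v' S) (hG : G.Connected) (f : G →g G') (hf : ∀ a, f a ≠ v') :
    f ⁻¹' S = ∅ ∨ f ⁻¹' S = univ := by
  refine (eq_empty_or_nonempty _).imp_right fun ⟨a, ha⟩ ↦ eq_univ_of_forall fun b ↦ ?_
  let φ : G →g G'.comap (Subtype.val : {x // x ≠ v'} → W) := ⟨fun u ↦ ⟨f u, hf u⟩, f.map_adj⟩
  exact hS.2 _ ha _ ⟨hf a, hf b, (hG.preconnected a b).map φ⟩

lemma exists_center [Finite V] (hG : G.Connected) {c : V} {d : ℕ} (hc : ∀ v, G.dist c v ≤ d) :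
    ∃ c' d', d' ≤ d ∧ (∀ v, G.dist c' v ≤ d') ∧ ∀ w, ∃ v, d' ≤ G.dist w v := by
  have : Nonempty V := ⟨c⟩
  have hcast : ∀ u v, (G.dist u v : ℕ∞) = G.edist u v := fun u v ↦
    (hG.preconnected u v).coe_dist_eq_edist
  obtain ⟨c', hc'⟩ := G.exists_eccent_eq_radius
  have hrad : G.radius ≤ d := SimpleGraph.radius_le_eccent.trans <|
    (G.eccent_le_iff c d).2 fun v ↦ hcast c v ▸ Nat.cast_le.2 (hc v)
  obtain ⟨d', hd'⟩ := ENat.ne_top_iff_exists.1 (hrad.trans_lt (ENat.natCast_lt_top d)).ne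
  refine ⟨c', d', by exact_mod_cast hd' ▸ hrad, fun v ↦ ?_, fun w ↦ ?_⟩
  · have h := G.edist_le_eccent (u := c') (v := v)
    rw [hc', ← hd', ← hcast] at h
    exact_mod_cast h
  · obtain ⟨v, hv⟩ := G.exists_edist_eq_eccent_of_finite w
    have h := SimpleGraph.radius_le_eccent (G := G) (u := w)
    rw [← hd', ← hv, ← hcast] at h
    exact ⟨v, by exact_mod_cast h⟩

end Graph

section Pendant

variable {V : Type*} {par : V → V} {root v : V}

def pendantPar (par : V → V) (root : V) (x : Option V) : Option V := some (x.elim root par)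

lemma pendantPar_iterate_some (n : ℕ) (v : V) :
    (pendantPar par root)^[n] (some v) = some (par^[n] v) :=
  ((Function.Semiconj.iterate_right (f := some) (fun _ ↦ rfl) n) v).symm

lemma IsParentTree.pendant (h : IsParentTree par root) :
    IsParentTree (pendantPar par root) (some root) where
  eq_self_iff
    | none => by simp [pendantPar]
    | some v => by simp [pendantPar, h.eq_self_iff]
  exists_iterate_eq
    | none => ⟨1, rfl⟩
    | some v => (h.exists_iterate_eq v).imp fun n hn ↦ by rw [pendantPar_iterate_some, hn]

def pendantEmbedding : parentGraph par ↪g parentGraph (pendantPar par root) :=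
  parentGraphEmbedding ⟨some, Option.some_injective V⟩ fun _ _ _ ↦ Option.some_inj

lemma pendant_adj_none_iff {x : Option V} :
    (parentGraph (pendantPar par root)).Adj none x ↔ x = some root := by
  simp only [parentGraph, SimpleGraph.fromRel_adj, pendantPar, Option.elim_none]
  constructor
  · rintro ⟨-, h | h⟩
    exacts [h.symm, (Option.some_ne_none _ h).elim]
  · rintro rfl
    exact ⟨(Option.some_ne_none _).symm, .inl rfl⟩

lemma pendant_isLeaf_none : IsLeaf (parentGraph (pendantPar par root)) none :=
  fun _ _ hx hy ↦ (pendant_adj_none_iff.1 hx).trans (pendant_adj_none_iff.1 hy).symm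

lemma pendant_isLeaf_some_iff (hroot : ¬ IsLeaf (parentGraph par) root) :
    IsLeaf (parentGraph (pendantPar par root)) (some v) ↔ IsLeaf (parentGraph par) v := by
  refine ⟨IsLeaf.of_embedding pendantEmbedding, fun hv ↦ IsLeaf.map pendantEmbedding hv ?_⟩
  rintro (_ | u) hx
  · exact (hroot (Option.some_inj.1 (pendant_adj_none_iff.1 hx.symm) ▸ hv)).elim
  · exact ⟨u, rfl⟩

end Pendant

section Hang

variable {ι : Type*} {V : ι → Type*} {par : ∀ i, V i → V i} {root : ∀ i, V i} {i : ι} {v : V i}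

open Classical in
noncomputable def hangPar (par : ∀ i, V i → V i) (root : ∀ i, V i) :
    Option (Σ i, V i) → Option (Σ i, V i)
  | none => none
  | some ⟨i, v⟩ => if v = root i then none else some ⟨i, par i v⟩

lemma hangPar_some_root : hangPar par root (some ⟨i, root i⟩) = none := if_pos rfl

lemma hangPar_some_of_ne (hv : v ≠ root i) :
    hangPar par root (some ⟨i, v⟩) = some ⟨i, par i v⟩ := if_neg hv

lemma fst_eq_of_hangPar_eq {j : ι} {u : V j} (h : hangPar par root (some ⟨i, v⟩) = some ⟨j, u⟩) :
    i = j := by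
  by_cases hv : v = root i
  · rw [hv, hangPar_some_root] at h
    exact (Option.some_ne_none _ h.symm).elim
  · rw [hangPar_some_of_ne hv, Option.some_inj] at h
    exact congrArg Sigma.fst h

lemma hangPar_iterate {n : ℕ}
    (hn : (par i)^[n] v = root i) : (hangPar par root)^[n + 1] (some ⟨i, v⟩) = none := by
  induction n generalizing v with
  | zero => subst hn; exact hangPar_some_root
  | succ n ih =>
    rw [Function.iterate_succ_apply]
    by_cases hv : v = root i
    · rw [hv, hangPar_some_root]; exact Function.iterate_fixed rfl _
    · rw [hangPar_some_of_ne hv]; exact ih hn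

lemma isParentTree_hangPar (h : ∀ i, IsParentTree (par i) (root i)) :
    IsParentTree (hangPar par root) none where
  eq_self_iff
    | none => iff_of_true rfl rfl
    | some ⟨i, v⟩ => by
      refine iff_of_false (fun hfix ↦ ?_) (Option.some_ne_none _)
      by_cases hv : v = root i
      · rw [hv, hangPar_some_root] at hfix
        exact Option.some_ne_none _ hfix.symm
      · rw [hangPar_some_of_ne hv, Option.some_inj, Sigma.mk.inj_iff] at hfix
        exact hv (((h i).eq_self_iff v).1 (eq_of_heq hfix.2))
  exists_iterate_eq
    | none => ⟨0, rfl⟩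
    | some ⟨i, v⟩ => let ⟨n, hn⟩ := (h i).exists_iterate_eq v; ⟨n + 1, hangPar_iterate hn⟩

noncomputable def hangEmbedding (h : ∀ i, IsParentTree (par i) (root i)) (i : ι) :
    parentGraph (par i) ↪g parentGraph (hangPar par root) :=
  parentGraphEmbedding ⟨fun v ↦ some ⟨i, v⟩, fun _ _ huv ↦ eq_of_heq (Sigma.mk.inj_iff.1
    (Option.some_inj.1 huv)).2⟩ fun u w huw ↦ by
      change hangPar par root (some ⟨i, u⟩) = some ⟨i, w⟩ ↔ par i u = w
      by_cases hu : u = root i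
      · subst hu
        rw [hangPar_some_root]
        exact iff_of_false (Option.some_ne_none _).symm fun hw ↦ huw (by rw [← hw, (h i).par_root])
      · simp [hangPar_some_of_ne hu]

lemma hang_adj_none_iff {x : Option (Σ i, V i)} :
    (parentGraph (hangPar par root)).Adj none x ↔ ∃ i, x = some ⟨i, root i⟩ := by
  simp only [parentGraph, SimpleGraph.fromRel_adj]
  constructor
  · rintro ⟨hx, h | h⟩
    · exact (hx h).elim
    · obtain _ | ⟨i, v⟩ := x
      · exact (hx rfl).elim
      by_cases hv : v = root i
      · exact ⟨i, hv ▸ rfl⟩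
      · rw [hangPar_some_of_ne hv] at h
        exact (Option.some_ne_none _ h).elim
  · rintro ⟨i, rfl⟩
    exact ⟨(Option.some_ne_none _).symm, .inr hangPar_some_root⟩

lemma hang_adj_some {x : Option (Σ i, V i)}
    (hx : (parentGraph (hangPar par root)).Adj (some ⟨i, v⟩) x) :
    (x = none ∧ v = root i) ∨ ∃ u, x = some ⟨i, u⟩ := by
  obtain _ | ⟨j, u⟩ := x
  · obtain ⟨j, hj⟩ := hang_adj_none_iff.1 hx.symm
    obtain ⟨rfl, hv⟩ := Sigma.mk.inj_iff.1 (Option.some_inj.1 hj)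
    exact .inl ⟨rfl, eq_of_heq hv⟩
  · obtain ⟨-, h | h⟩ := (SimpleGraph.fromRel_adj _ _ _).1 hx
    · obtain rfl := fst_eq_of_hangPar_eq h; exact .inr ⟨u, rfl⟩
    · obtain rfl := fst_eq_of_hangPar_eq h; exact .inr ⟨u, rfl⟩

lemma hang_not_isLeaf_none [Nontrivial ι] :
    ¬ IsLeaf (parentGraph (hangPar par root)) none := by
  obtain ⟨i, j, hij⟩ := exists_pair_ne ι
  exact not_isLeaf_of_adj_of_adj (hang_adj_none_iff.2 ⟨i, rfl⟩) (hang_adj_none_iff.2 ⟨j, rfl⟩)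
    fun h ↦ hij (congrArg Sigma.fst (Option.some_inj.1 h))

lemma hang_isLeaf_some_iff (h : ∀ i, IsParentTree (par i) (root i))
    (hsub : IsLeaf (parentGraph (par i)) (root i) → Subsingleton (V i)) :
    IsLeaf (parentGraph (hangPar par root)) (some ⟨i, v⟩) ↔ IsLeaf (parentGraph (par i)) v := by
  refine ⟨IsLeaf.of_embedding (hangEmbedding h i), fun hv ↦ ?_⟩
  by_cases hvr : v = root i
  · subst hvr
    have := hsub hv
    have hnone : ∀ x, (parentGraph (hangPar par root)).Adj (some ⟨i, root i⟩) x → x = none := by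
      intro x hx
      obtain ⟨rfl, -⟩ | ⟨u, rfl⟩ := hang_adj_some hx
      · rfl
      · exact ((hangEmbedding h i).map_adj_iff.1 hx |>.ne (Subsingleton.elim _ _)).elim
    exact fun x y hx hy ↦ (hnone x hx).trans (hnone y hy).symm
  · refine IsLeaf.map (hangEmbedding h i) hv fun x hx ↦ ?_
    obtain ⟨-, hv'⟩ | ⟨u, rfl⟩ := hang_adj_some hx
    exacts [(hvr hv').elim, ⟨u, rfl⟩]

end Hang

section RootedDecomp

variable {α : Type*} {V : Type*}

def leafLabels (G : SimpleGraph V) (label : V → α) (S : Set V) : Set α :=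
  label '' {u ∈ S | IsLeaf G u}

/-- A `Decomp` whose tree is given by a parent function of height at most `d`. The root is a leaf
only in the one-vertex tree, so hanging the tree below a new vertex keeps its leaves. -/
structure RootedDecomp (M : Matroid α) (d r : ℕ) where
  V : Type
  finite : Finite V
  par : V → V
  root : V
  isParentTree : IsParentTree par root
  iterate_eq_root : ∀ v, par^[d] v = root
  label : V → α
  label_mem : ∀ v, IsLeaf (parentGraph par) v → label v ∈ M.E
  label_inj : ∀ v w, IsLeaf (parentGraph par) v → IsLeaf (parentGraph par) w →
    label v = label w → v = w
  label_surj : ∀ e ∈ M.E, ∃ v, IsLeaf (parentGraph par) v ∧ label v = e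
  conn : ∀ v, ¬ IsLeaf (parentGraph par) v → ∀ S : Set V, UnionOfParts (parentGraph par) v S →
    lam M (leafLabels (parentGraph par) label S) ≤ r
  subsingleton_of_isLeaf_root : IsLeaf (parentGraph par) root → Subsingleton V

namespace RootedDecomp

variable {M : Matroid α} {d r : ℕ} {e : α}

def mono (D : RootedDecomp M d r) {d' r' : ℕ} (hd : d ≤ d') (hr : r ≤ r') :
    RootedDecomp M d' r' where
  __ := D
  iterate_eq_root v := D.isParentTree.iterate_eq_root_of_le (D.iterate_eq_root v) hd
  conn v hv S hS := (D.conn v hv S hS).trans (by exact_mod_cast hr)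

lemma hasBranchDepthLE (D : RootedDecomp M d r) {k : ℕ} (hd : d ≤ k) (hr : r ≤ k) :
    HasBranchDepthLE M k := by
  have := D.finite
  obtain ⟨c, d', hd', hc, hrad⟩ := exists_center D.isParentTree.connected
    fun v ↦ D.isParentTree.dist_le (D.iterate_eq_root v)
  exact ⟨d', r, hd'.trans hd, hr, ⟨{ D with
    fin := Fintype.ofFinite D.V
    G := parentGraph D.par
    tree := D.isParentTree.isTree
    center := c
    radius_le := hc
    radius_ge := hrad }⟩⟩

def single (hE : M.E = {e}) : RootedDecomp M 0 0 where
  V := Unit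
  finite := inferInstance
  par := id
  root := ()
  isParentTree := ⟨fun _ ↦ iff_of_true rfl rfl, fun _ ↦ ⟨0, rfl⟩⟩
  iterate_eq_root _ := rfl
  label _ := e
  label_mem _ _ := hE ▸ rfl
  label_inj _ _ _ _ _ := rfl
  label_surj _ hx := ⟨(), fun _ _ h ↦ (h.ne rfl).elim, (hE ▸ hx).symm⟩
  conn _ hv := (hv fun _ _ h ↦ (h.ne rfl).elim).elim
  subsingleton_of_isLeaf_root _ := inferInstance

variable {N : Matroid α}

lemma leafLabels_pendant (D : RootedDecomp N d r) (hroot : ¬ IsLeaf (parentGraph D.par) D.root)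
    (S : Set (Option D.V)) :
    leafLabels (parentGraph (pendantPar D.par D.root)) (fun x ↦ x.elim e D.label) S =
      {y | none ∈ S ∧ y = e} ∪ leafLabels (parentGraph D.par) D.label (some ⁻¹' S) := by
  ext y
  simp only [leafLabels, mem_image, mem_ofPred_eq, Option.exists, mem_union, mem_preimage,
    pendant_isLeaf_some_iff hroot, Option.elim_none, Option.elim_some]
  simp [pendant_isLeaf_none, eq_comm]

def pendant (D : RootedDecomp N d r) (hd : 1 ≤ d)
    (hroot : ¬ IsLeaf (parentGraph D.par) D.root) (he : e ∈ M.E) (hE : N.E = M.E \ {e})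
    (hlam : ∀ X ⊆ N.E, lam M X ≤ lam N X + 1 ∧ lam M (insert e X) ≤ lam N X + 1) :
    RootedDecomp M d (r + 1) where
  V := Option D.V
  finite := have := D.finite; inferInstance
  par := pendantPar D.par D.root
  root := some D.root
  isParentTree := D.isParentTree.pendant
  iterate_eq_root
    | none => by
      obtain ⟨k, rfl⟩ := Nat.exists_eq_add_of_le' hd
      rw [Function.iterate_succ_apply]
      exact (pendantPar_iterate_some k D.root).trans
        (congrArg some (Function.iterate_fixed D.isParentTree.par_root k))
    | some v => by rw [pendantPar_iterate_some, D.iterate_eq_root]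
  label x := x.elim e D.label
  label_mem
    | none, _ => he
    | some v, hv => (hE ▸ D.label_mem v ((pendant_isLeaf_some_iff hroot).1 hv)).1
  label_inj := by
    have hne : ∀ v, IsLeaf (parentGraph D.par) v → D.label v ≠ e :=
      fun v hv h ↦ (hE ▸ D.label_mem v hv).2 h
    simp only [← pendant_isLeaf_some_iff hroot] at hne
    rintro (_ | v) (_ | w) hv hw h
    · rfl
    · exact (hne w hw h.symm).elim
    · exact (hne v hv h).elim
    · exact congrArg some (D.label_inj v w ((pendant_isLeaf_some_iff hroot).1 hv)
        ((pendant_isLeaf_some_iff hroot).1 hw) h)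
  label_surj x hx := by
    by_cases hxe : x = e
    · exact ⟨none, pendant_isLeaf_none, hxe.symm⟩
    · obtain ⟨v, hv, rfl⟩ := D.label_surj x (hE ▸ ⟨hx, hxe⟩)
      exact ⟨some v, (pendant_isLeaf_some_iff hroot).2 hv, rfl⟩
  conn
    | none, hx, _, _ => (hx pendant_isLeaf_none).elim
    | some v, hv, S, hS => by
      have hX : leafLabels (parentGraph D.par) D.label (some ⁻¹' S) ⊆ N.E :=
        image_subset_iff.2 fun u hu ↦ D.label_mem u hu.2
      have hconn : lam N (leafLabels _ D.label (some ⁻¹' S)) ≤ r :=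
        D.conn v (fun h ↦ hv ((pendant_isLeaf_some_iff hroot).2 h)) _
          (hS.preimage pendantEmbedding)
      have := hlam _ hX
      rw [leafLabels_pendant D hroot]
      by_cases hn : none ∈ S
      · simp only [hn, true_and, ofPred_eq_eq_singleton, singleton_union]
        omega
      · simp only [hn, false_and, ofPred_false, empty_union]
        omega
  subsingleton_of_isLeaf_root h := (hroot ((pendant_isLeaf_some_iff hroot).1 h)).elim

lemma leafLabels_univ (D : RootedDecomp M d r) :
    leafLabels (parentGraph D.par) D.label univ = M.E := by
  refine subset_antisymm (image_subset_iff.2 fun v hv ↦ D.label_mem v hv.2) fun x hx ↦ ?_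
  obtain ⟨v, hv, rfl⟩ := D.label_surj x hx
  exact ⟨v, ⟨trivial, hv⟩, rfl⟩

section Hang

variable {ι : Type} {P : ι → Set α} (D : ∀ i, RootedDecomp (M ↾ P i) d r)

lemma leafLabels_hang (lab : Option (Σ i, (D i).V) → α)
    (hlab : ∀ i v, lab (some ⟨i, v⟩) = (D i).label v) [Nontrivial ι]
    (S : Set (Option (Σ i, (D i).V))) :
    leafLabels (parentGraph (hangPar (fun i ↦ (D i).par) (fun i ↦ (D i).root))) lab S =
      ⋃ i, leafLabels (parentGraph (D i).par) (D i).label ((fun v ↦ some ⟨i, v⟩) ⁻¹' S) := by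
  ext y
  simp only [leafLabels, mem_image, mem_ofPred_eq, Option.exists, Sigma.exists, mem_iUnion,
    mem_preimage, hlab, hang_isLeaf_some_iff (fun i ↦ (D i).isParentTree)
      (D _).subsingleton_of_isLeaf_root, hang_not_isLeaf_none]
  simp

lemma mem_leafLabels_preimage_hang_iff {x : Option (Σ i, (D i).V)}
    {S : Set (Option (Σ i, (D i).V))}
    (hS : UnionOfParts (parentGraph (hangPar (fun i ↦ (D i).par) (fun i ↦ (D i).root))) x S)
    {j : ι} (hj : ∀ a, some ⟨j, a⟩ ≠ x) {y : α} :
    y ∈ leafLabels (parentGraph (D j).par) (D j).label ((fun a ↦ some ⟨j, a⟩) ⁻¹' S) ↔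
      ((fun a ↦ some ⟨j, a⟩) ⁻¹' S).Nonempty ∧ y ∈ P j := by
  have h : (fun a ↦ some ⟨j, a⟩) ⁻¹' S = ∅ ∨ (fun a ↦ some ⟨j, a⟩) ⁻¹' S = univ :=
    hS.preimage_eq_empty_or_univ (D j).isParentTree.connected
      (hangEmbedding (fun i ↦ (D i).isParentTree) j).toHom hj
  rcases h with h | h
  · simp [h, leafLabels]
  · rw [h, leafLabels_univ, restrict_ground_eq]
    exact ⟨fun hy ↦ ⟨⟨(D j).root, trivial⟩, hy⟩, And.right⟩

lemma lam_leafLabels_hang_le [Nontrivial ι] (hroot : ∀ J : Set ι, lam M (⋃ j ∈ J, P j) ≤ r)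
    (hpart : ∀ i, ∀ X ⊆ P i, ∀ J : Set ι, i ∉ J → lam (M ↾ P i) X ≤ r →
      lam M (X ∪ ⋃ j ∈ J, P j) ≤ r)
    (lab : Option (Σ i, (D i).V) → α) (hlab : ∀ i v, lab (some ⟨i, v⟩) = (D i).label v)
    {x : Option (Σ i, (D i).V)}
    (hx : ¬ IsLeaf (parentGraph (hangPar (fun i ↦ (D i).par) (fun i ↦ (D i).root))) x)
    {S : Set (Option (Σ i, (D i).V))}
    (hS : UnionOfParts (parentGraph (hangPar (fun i ↦ (D i).par) (fun i ↦ (D i).root))) x S) :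
    lam M (leafLabels (parentGraph (hangPar (fun i ↦ (D i).par) (fun i ↦ (D i).root))) lab S)
      ≤ r := by
  have htree := fun i ↦ (D i).isParentTree
  have hpre := fun j hj y ↦ mem_leafLabels_preimage_hang_iff (y := y) D hS (j := j) hj
  rw [leafLabels_hang D lab hlab]
  obtain _ | ⟨i, v⟩ := x
  · convert hroot {j | ((fun a ↦ some ⟨j, a⟩) ⁻¹' S).Nonempty} using 2
    ext y
    simp only [mem_iUnion]
    exact exists_congr fun j ↦ (hpre j (fun _ ↦ Option.some_ne_none _) y).trans (by simp)
  · have hv : ¬ IsLeaf (parentGraph (D i).par) v :=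
      fun h ↦ hx ((hang_isLeaf_some_iff htree (D i).subsingleton_of_isLeaf_root).2 h)
    have hXi : leafLabels (parentGraph (D i).par) (D i).label ((fun a ↦ some ⟨i, a⟩) ⁻¹' S) ⊆ P i :=
      image_subset_iff.2 fun u hu ↦ (D i).label_mem u hu.2
    have hne : ∀ j, j ≠ i → ∀ a : (D j).V, (some ⟨j, a⟩ : Option (Σ i, (D i).V)) ≠ some ⟨i, v⟩ :=
      fun j hji a h ↦ hji (congrArg Sigma.fst
        (Option.some_inj.1 h : (⟨j, a⟩ : Σ i, (D i).V) = ⟨i, v⟩))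
    convert hpart i _ hXi {j | j ≠ i ∧ ((fun a ↦ some ⟨j, a⟩) ⁻¹' S).Nonempty} (fun h ↦ h.1 rfl)
      ((D i).conn v hv _ (hS.preimage (hangEmbedding htree i))) using 2
    ext y
    simp only [mem_iUnion, mem_union, mem_ofPred_eq]
    constructor
    · rintro ⟨j, hy⟩
      by_cases hji : j = i
      · subst hji
        exact .inl hy
      · obtain ⟨hS', hy⟩ := (hpre j (hne j hji) y).1 hy
        exact .inr ⟨j, ⟨hji, hS'⟩, hy⟩
    · rintro (hy | ⟨j, ⟨hji, hS'⟩, hy⟩)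
      · exact ⟨i, hy⟩
      · exact ⟨j, (hpre j (hne j hji) y).2 ⟨hS', hy⟩⟩

-- `hpart` assumes the bound only for `M ↾ P i`: for components both connectivities agree, and for
-- two-element matroids every connectivity is at most one.
noncomputable def hang [Finite ι] [Nontrivial ι] (hdisj : Pairwise fun i j ↦ Disjoint (P i) (P j))
    (hcover : ⋃ i, P i = M.E) (hroot : ∀ J : Set ι, lam M (⋃ j ∈ J, P j) ≤ r)
    (hpart : ∀ i, ∀ X ⊆ P i, ∀ J : Set ι, i ∉ J → lam (M ↾ P i) X ≤ r →
      lam M (X ∪ ⋃ j ∈ J, P j) ≤ r) :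
    RootedDecomp M (d + 1) r :=
  have htree := fun i ↦ (D i).isParentTree
  have hleaf : ∀ i v, IsLeaf (parentGraph (hangPar (fun i ↦ (D i).par) (fun i ↦ (D i).root)))
      (some ⟨i, v⟩) ↔ IsLeaf (parentGraph (D i).par) v :=
    fun i _ ↦ hang_isLeaf_some_iff htree (D i).subsingleton_of_isLeaf_root
  { V := Option (Σ i, (D i).V)
    finite := have := fun i ↦ (D i).finite; inferInstance
    par := hangPar (fun i ↦ (D i).par) (fun i ↦ (D i).root)
    root := none
    isParentTree := isParentTree_hangPar htree
    iterate_eq_root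
      | none => Function.iterate_fixed rfl _
      | some ⟨i, v⟩ => hangPar_iterate ((D i).iterate_eq_root v)
    label x := x.elim ((D (Classical.arbitrary ι)).label (D _).root) fun p ↦ (D p.1).label p.2
    label_mem
      | none, hx => (hang_not_isLeaf_none hx).elim
      | some ⟨i, v⟩, hv => hcover ▸ mem_iUnion_of_mem i ((D i).label_mem v ((hleaf i v).1 hv))
    label_inj
      | none, _, hv, _, _ => (hang_not_isLeaf_none hv).elim
      | _, none, _, hw, _ => (hang_not_isLeaf_none hw).elim
      | some ⟨i, v⟩, some ⟨j, w⟩, hv, hw, h => by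
        rw [hleaf] at hv hw
        change (D i).label v = (D j).label w at h
        obtain rfl : i = j := hdisj.eq <| not_disjoint_iff.2
          ⟨_, (D i).label_mem v hv, h ▸ (D j).label_mem w hw⟩
        rw [(D i).label_inj v w hv hw h]
    label_surj x hx := by
      obtain ⟨i, hi⟩ := mem_iUnion.1 (hcover.symm ▸ hx)
      obtain ⟨v, hv, rfl⟩ := (D i).label_surj x hi
      exact ⟨some ⟨i, v⟩, (hleaf i v).2 hv, rfl⟩
    conn _ hx _ hS := lam_leafLabels_hang_le D hroot hpart _ (fun _ _ ↦ rfl) hx hS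
    subsingleton_of_isLeaf_root h := (hang_not_isLeaf_none h).elim }

end Hang

lemma nonempty_of_ground_eq_pair [M.Finite] {f : α} (hE : M.E = {e, f}) (hef : e ≠ f) :
    Nonempty (RootedDecomp M 1 1) := by
  let P : Bool → Set α := fun b ↦ cond b {e} {f}
  let D : ∀ b, RootedDecomp (M ↾ P b) 0 1 := fun b ↦
    (single (e := cond b e f) (by cases b <;> rfl)).mono le_rfl zero_le_one
  have hcover : ⋃ b, P b = M.E := by rw [hE, insert_eq, union_eq_iUnion]
  have hlam : ∀ X ⊆ M.E, lam M X ≤ 1 := fun X hX ↦ lam_le_one_of_ground_eq_pair hE hX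
  have hsub : ∀ b, P b ⊆ M.E := fun b ↦ hcover ▸ subset_iUnion P b
  refine ⟨hang D ?_ hcover (fun J ↦ hlam _ (iUnion₂_subset fun j _ ↦ hsub j))
    fun i X hX J _ _ ↦ hlam _ (union_subset (hX.trans (hsub i)) (iUnion₂_subset fun j _ ↦ hsub j))⟩
  rintro (_ | _) (_ | _) h <;> simp_all [P, eq_comm]

lemma nonempty_of_lam_le [M.Finite] (D : RootedDecomp N d r) (hd : 1 ≤ d) (he : e ∈ M.E)
    (hE : N.E = M.E \ {e}) (hN : N.E.Nonempty)
    (hlam : ∀ X ⊆ N.E, lam M X ≤ lam N X + 1 ∧ lam M (insert e X) ≤ lam N X + 1) :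
    Nonempty (RootedDecomp M d (r + 1)) := by
  by_cases hroot : IsLeaf (parentGraph D.par) D.root
  · have := D.subsingleton_of_isLeaf_root hroot
    obtain ⟨f, hf⟩ := hN
    have hNE : N.E = {f} := eq_singleton_iff_unique_mem.2 ⟨hf, fun x hx ↦ by
      obtain ⟨v, -, rfl⟩ := D.label_surj x hx
      obtain ⟨w, -, rfl⟩ := D.label_surj f hf
      rw [Subsingleton.elim v w]⟩
    have hef : e ≠ f := fun h ↦ (hE ▸ hf).2 h.symm
    have hME : M.E = {e, f} := by
      rw [← hNE, hE, insert_sdiff_singleton, insert_eq_of_mem he]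
    exact ⟨(nonempty_of_ground_eq_pair hME hef).some.mono hd (by omega)⟩
  · exact ⟨D.pendant hd hroot he hE hlam⟩

lemma nonempty_of_not_mconnected [M.Finite] (hM : ¬ MConnected M) (hne : M.E.Nonempty)
    (hD : ∀ e ∈ M.E, Nonempty (RootedDecomp (M ↾ component M e) d r)) :
    Nonempty (RootedDecomp M (d + 1) r) := by
  obtain ⟨n, P, hP⟩ := (M.ground_finite.image (component M)).fin_embedding
  have hmem : ∀ i, ∃ e ∈ M.E, component M e = P i := fun i ↦
    (hP ▸ mem_range_self i : P i ∈ component M '' M.E)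
  have hsep : ∀ i, IsSeparator M (P i) := fun i ↦
    let ⟨_, _, he⟩ := hmem i; he ▸ isSeparator_component
  have hsub : ∀ i, P i ⊆ M.E := fun i ↦ let ⟨_, _, he⟩ := hmem i; he ▸ component_subset_ground
  have hdisj : Pairwise fun i j ↦ Disjoint (P i) (P j) := by
    intro i j hij
    obtain ⟨a, -, ha⟩ := hmem i
    obtain ⟨b, -, hb⟩ := hmem j
    rw [← ha, ← hb]
    exact disjoint_component_of_ne fun h ↦ hij (P.injective (ha ▸ hb ▸ h))
  have hcover : ⋃ i, P i = M.E := by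
    refine (iUnion_subset hsub).antisymm fun x hx ↦ ?_
    obtain ⟨i, hi⟩ : component M x ∈ range P := hP ▸ mem_image_of_mem _ hx
    exact mem_iUnion_of_mem i (hi ▸ mem_component_self hx)
  have : Nontrivial (Fin n) := by
    obtain ⟨x, hx, y, hy, hxy⟩ := exists_component_ne_of_not_mconnected hM hne
    obtain ⟨i, hi⟩ : component M x ∈ range P := hP ▸ mem_image_of_mem _ hx
    obtain ⟨j, hj⟩ : component M y ∈ range P := hP ▸ mem_image_of_mem _ hy
    exact ⟨i, j, fun hij ↦ hxy (hi ▸ hj ▸ congrArg P hij)⟩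
  have hD' : ∀ i, Nonempty (RootedDecomp (M ↾ P i) d r) := fun i ↦
    let ⟨e, he, hei⟩ := hmem i; hei ▸ hD e he
  refine ⟨hang (fun i ↦ (hD' i).some) hdisj hcover (fun J ↦ ?_) fun i X hX J hiJ hr ↦ ?_⟩
  · rw [(isSeparator_biUnion fun j _ ↦ hsep j).lam_eq_zero (iUnion₂_subset fun j _ ↦ hsub j)]
    exact Int.natCast_nonneg r
  · rwa [(hsep i).lam_union (hsub i) (isSeparator_biUnion fun j _ ↦ hsep j)
      (iUnion₂_subset fun j _ ↦ hsub j) (disjoint_iUnion₂_left.2 fun j hj ↦ hdisj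
        fun h ↦ hiJ (h ▸ hj)) hX]

end RootedDecomp

end RootedDecomp

section Main

variable {α : Type*} {M : Matroid α} {d : ℕ}

lemma finite_restrict [M.Finite] {X : Set α} (hX : X ⊆ M.E) : (M ↾ X).Finite :=
  ⟨M.ground_finite.subset hX⟩

lemma _root_.CddLE.one_le (h : CddLE M d) : 1 ≤ d := by
  induction h with
  | single _ _ _ _ hd => exact hd
  | disconn _ _ hne _ _ ih => exact ih _ hne.some_mem
  | contr | del => omega

lemma _root_.CddLE.ground_nonempty (h : CddLE M d) : M.E.Nonempty := by
  cases h with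
  | single _ e _ hE _ => exact ⟨e, hE ▸ rfl⟩
  | disconn _ _ hne _ _ => exact hne
  | contr _ _ e _ he _ _ _ | del _ e _ he _ => exact ⟨e, he⟩

lemma _root_.CddLE.nonempty_rootedDecomp (h : CddLE M d) :
    M.Finite → Nonempty (RootedDecomp M d d) ∧
      (MConnected M → Nonempty (RootedDecomp M (d - 1) d)) := by
  induction h with
  | single M e d hE _ =>
    intro
    have D := RootedDecomp.single hE
    exact ⟨⟨D.mono d.zero_le d.zero_le⟩, fun _ ↦ ⟨D.mono (d - 1).zero_le d.zero_le⟩⟩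
  | disconn M d hne hnc hcomp ih =>
    intro
    refine ⟨?_, fun h ↦ (hnc h).elim⟩
    have := RootedDecomp.nonempty_of_not_mconnected hnc hne fun x hx ↦
      (ih x hx (finite_restrict component_subset_ground)).2 (mconnected_restrict_component hx)
    rwa [Nat.sub_add_cancel (hcomp _ hne.some_mem).one_le] at this
  | contr M N e d he hind hce hN ih =>
    intro
    obtain ⟨D⟩ := (ih (contractElem_finite hce)).1
    obtain ⟨D'⟩ := D.nonempty_of_lam_le hN.one_le he hce.1 hN.ground_nonempty
      fun X hX ↦ lam_le_of_contractElem hce hind hX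
    exact ⟨⟨D'.mono (by omega) le_rfl⟩, fun _ ↦ ⟨D'.mono (by omega) le_rfl⟩⟩
  | del M e d he hN ih =>
    intro
    obtain ⟨D⟩ := (ih (finite_restrict sdiff_subset)).1
    obtain ⟨D'⟩ := D.nonempty_of_lam_le hN.one_le he restrict_ground_eq hN.ground_nonempty
      fun X hX ↦ lam_le_of_delete he hX
    exact ⟨⟨D'.mono (by omega) le_rfl⟩, fun _ ↦ ⟨D'.mono (by omega) le_rfl⟩⟩

end Main

end BranchDepth

/-- Branch-depth is at most contraction-deletion-depth. -/
theorem stmt13 {α : Type*} (M : Matroid α) [M.Finite] (d : ℕ)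
    (h : CddLE M d) : HasBranchDepthLE M d := by
  obtain ⟨D⟩ := (h.nonempty_rootedDecomp ‹_›).1
  exact D.hasBranchDepthLE le_rfl le_rfl
end

section
/- Let G_n be the graph obtained from a cycle of length n by replacing each edge by n parallel edges (the 'fat cycle'). The branch-depth of the graphic matroid M(G_n) equals 2 for all n ≥ 3. -/
/-- The independence condition of the graphic matroid of the fat cycle `G_n`:
the ground set consists of pairs `(i, j)` where `(i, j)` is the `j`-th parallel edge
between the `i`-th and `(i+1)`-st vertices of a cycle of length `n`. A set of edges is
acyclic iff it contains at most one edge of each parallel class and does not contain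
an edge from every parallel class. -/
def FatCycleIndep (n : ℕ) (S : Set (Fin n × Fin n)) : Prop :=
  (∀ i j j', (i, j) ∈ S → (i, j') ∈ S → j = j') ∧ ¬ (∀ i, ∃ j, (i, j) ∈ S)

/-!
An edge set of the fat cycle is independent iff it uses every parallel class at most once and
misses some class, so `r(X)` is at most the number of classes `X` meets, and `r(E) = n - 1`.

For `bd ≤ 2`, take the tree of radius two with one inner vertex per parallel class whose leaves
are the edges of that class. The part `X` cut out at an inner vertex splits at most one parallel
class, so `X` and `E \ X` together meet at most `n + 1` classes and `λ(X) ≤ n + 1 - (n - 1) = 2`.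

A decomposition of radius one is a star, and its centre sees every edge set `X` as a union of
components of the star minus the centre. For `X` the column `{(i, 0) | i}`, both `X` and
`E \ X ⊇ {(i, 1) | i}` have rank `n - 1`, so `λ(X) = n - 1 ≥ 2`, and `bd > 1`.
-/

open Set

section MatroidRank

variable {α : Type*} {M : Matroid α} {I X : Set α} {k : ℕ}

lemma mrank_le_of_forall_indep (h : ∀ I ⊆ X, M.Indep I → I.ncard ≤ k) : mrank M X ≤ k :=
  csSup_le ⟨0, ∅, empty_subset X, M.empty_indep, ncard_empty α⟩
    (by rintro _ ⟨I, hIX, hI, rfl⟩; exact h I hIX hI)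

lemma Matroid.Indep.ncard_le_mrank [Finite α] (hI : M.Indep I) (hIX : I ⊆ X) :
    I.ncard ≤ mrank M X :=
  le_csSup ⟨Nat.card α, by rintro _ ⟨J, -, -, rfl⟩; exact ncard_le_card J⟩ ⟨I, hIX, hI, rfl⟩

end MatroidRank

section FatCycle

variable {n : ℕ} {S X : Set (Fin n × Fin n)}

lemma FatCycleIndep.injOn_fst (hS : FatCycleIndep n S) : InjOn Prod.fst S := by
  rintro ⟨i, j⟩ hij ⟨i', j'⟩ hij' (rfl : i = i')
  rw [hS.1 i j j' hij hij']

lemma FatCycleIndep.ncard_le_ncard_image_fst (hS : FatCycleIndep n S) (hSX : S ⊆ X) :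
    S.ncard ≤ (Prod.fst '' X).ncard := by
  rw [← hS.injOn_fst.ncard_image]
  exact ncard_le_ncard (image_mono hSX)

lemma FatCycleIndep.ncard_lt (hS : FatCycleIndep n S) : S.ncard < n := by
  obtain ⟨i₀, hi₀⟩ := not_forall.mp hS.2
  have hmiss : Prod.fst '' S ⊂ univ :=
    ssubset_univ_iff.mpr fun h => hi₀ <| by
      obtain ⟨⟨i, j⟩, hij, rfl⟩ := h.symm ▸ mem_univ i₀
      exact ⟨j, hij⟩
  calc S.ncard ≤ (Prod.fst '' S).ncard := hS.ncard_le_ncard_image_fst subset_rfl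
    _ < (univ : Set (Fin n)).ncard := ncard_lt_ncard hmiss
    _ = n := by simp

lemma ncard_setOf_snd_eq (c : Fin n) : {e : Fin n × Fin n | e.2 = c}.ncard = n := by
  have : {e : Fin n × Fin n | e.2 = c} = range fun i => (i, c) := by
    ext ⟨i, j⟩; simp [eq_comm]
  rw [this, ← image_univ, ncard_image_of_injective _ fun i i' h => (Prod.mk.inj h).1]
  simp

lemma fatCycleIndep_setOf_snd_eq_diff (c i₀ : Fin n) :
    FatCycleIndep n ({e | e.2 = c} \ {(i₀, c)}) := by
  refine ⟨fun i j j' hj hj' => hj.1.trans hj'.1.symm, fun h => ?_⟩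
  obtain ⟨j, hj, hne⟩ := h i₀
  exact hne (by simp_all)

variable {M : Matroid (Fin n × Fin n)} (hIndep : ∀ S, M.Indep S ↔ FatCycleIndep n S)
include hIndep

lemma mrank_le_ncard_image_fst (X : Set (Fin n × Fin n)) :
    mrank M X ≤ (Prod.fst '' X).ncard :=
  mrank_le_of_forall_indep fun _ hIX hI => ((hIndep _).1 hI).ncard_le_ncard_image_fst hIX

lemma sub_one_le_mrank_of_setOf_snd_eq_subset {c : Fin n} (hX : {e | e.2 = c} ⊆ X) :
    n - 1 ≤ mrank M X := by
  have hI := (hIndep _).2 (fatCycleIndep_setOf_snd_eq_diff c c)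
  calc n - 1 = ({e : Fin n × Fin n | e.2 = c} \ {(c, c)}).ncard := by
        rw [ncard_sdiff_singleton_of_mem (show (c, c) ∈ {e : Fin n × Fin n | e.2 = c} from rfl),
          ncard_setOf_snd_eq]
    _ ≤ mrank M X := hI.ncard_le_mrank (sdiff_subset.trans hX)

lemma mrank_univ (hn : 0 < n) : mrank M univ = n - 1 :=
  le_antisymm
    (mrank_le_of_forall_indep fun _ _ hI => Nat.le_sub_one_of_lt ((hIndep _).1 hI).ncard_lt)
    (sub_one_le_mrank_of_setOf_snd_eq_subset hIndep (c := ⟨0, hn⟩) (subset_univ _))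

lemma mlambda_univ_diff_eq (hn : 0 < n) (X : Set (Fin n × Fin n)) :
    mlambda M X (univ \ X) = mrank M X + mrank M (univ \ X) - (n - 1 : ℕ) := by
  rw [mlambda, union_sdiff_self, union_univ, mrank_univ hIndep hn]

lemma mlambda_le_two_of_subsingleton (hn : 0 < n) {J : Set (Fin n)} (hJ : J.Subsingleton)
    (hX : ∀ i ∉ J, ∀ j j', (i, j) ∈ X → (i, j') ∈ X) :
    mlambda M X (univ \ X) ≤ 2 := by
  have hsplit : Prod.fst '' X ∩ Prod.fst '' (univ \ X) ⊆ J := by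
    rintro i ⟨⟨⟨_, j⟩, hj, rfl⟩, ⟨⟨_, j'⟩, ⟨-, hj'⟩, rfl⟩⟩
    by_contra hi
    exact hj' (hX _ hi j j' hj)
  have hA := mrank_le_ncard_image_fst hIndep X
  have hB := mrank_le_ncard_image_fst hIndep (univ \ X)
  have hunion_inter := ncard_union_add_ncard_inter (Prod.fst '' X) (Prod.fst '' (univ \ X))
  have hunion :=
    (ncard_le_card (Prod.fst '' X ∪ Prod.fst '' (univ \ X))).trans_eq (Nat.card_fin n)
  have hinter := (ncard_le_ncard hsplit).trans (ncard_le_one_iff_subsingleton.mpr hJ)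
  rw [mlambda_univ_diff_eq hIndep hn]
  omega

lemma sub_one_le_mlambda {c c' : Fin n} (hc : {e | e.2 = c} ⊆ X)
    (hc' : {e | e.2 = c'} ⊆ univ \ X) :
    (n : ℤ) - 1 ≤ mlambda M X (univ \ X) := by
  have hA := sub_one_le_mrank_of_setOf_snd_eq_subset hIndep hc
  have hB := sub_one_le_mrank_of_setOf_snd_eq_subset hIndep hc'
  rw [mlambda_univ_diff_eq hIndep c.pos]
  omega

end FatCycle

open SimpleGraph

section Star

variable {V : Type*} {G : SimpleGraph V} {c : V}

lemma adj_of_forall_dist_le_one (hG : G.Connected) (hd : ∀ v, G.dist c v ≤ 1) {v : V}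
    (hv : v ≠ c) : G.Adj c v := by
  have h0 : G.dist c v ≠ 0 := fun h => hv ((hG.preconnected c v).dist_eq_zero_iff.mp h).symm
  exact dist_eq_one_iff_adj.mp (by have := hd v; omega)

lemma comap_val_ne_eq_bot (hG : G.IsTree) (hd : ∀ v, G.dist c v ≤ 1) :
    G.comap (Subtype.val : {x // x ≠ c} → V) = ⊥ := by
  classical
  ext ⟨u, hu⟩ ⟨w, hw⟩
  refine iff_of_false (fun huw => ?_) id
  have hu' := adj_of_forall_dist_le_one hG.connected hd hu
  have hw' := adj_of_forall_dist_le_one hG.connected hd hw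
  exact hG.isAcyclic.cliqueFree le_rfl {c, u, w} (is3Clique_triple_iff.mpr ⟨hu', hw', huw⟩)

lemma eq_of_offRel (hG : G.IsTree) (hd : ∀ v, G.dist c v ≤ 1) {a b : V}
    (h : offRel G c a b) : a = b := by
  obtain ⟨_, _, hab⟩ := h
  rw [comap_val_ne_eq_bot hG hd, reachable_bot] at hab
  exact congrArg Subtype.val hab

lemma not_isLeaf_of_forall_dist_le_one (hG : G.Connected) (hd : ∀ v, G.dist c v ≤ 1)
    {u₁ u₂ u₃ : V} (h₁₂ : u₁ ≠ u₂) (h₁₃ : u₁ ≠ u₃) (h₂₃ : u₂ ≠ u₃) : ¬ IsLeaf G c := by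
  intro hc
  have hle : ∀ u w, u ≠ c → w ≠ c → u = w := fun u w hu hw =>
    hc u w (adj_of_forall_dist_le_one hG hd hu) (adj_of_forall_dist_le_one hG hd hw)
  rcases eq_or_ne u₁ c with rfl | h₁
  · exact h₂₃ (hle _ _ h₁₂.symm h₁₃.symm)
  rcases eq_or_ne u₂ c with rfl | h₂
  · exact h₁₃ (hle _ _ h₁ h₂₃.symm)
  · exact h₁₂ (hle _ _ h₁ h₂)

end Star

lemma Decomp.mlambda_le_of_radius_le_one {α : Type*} {M : Matroid α} {d r : ℕ}
    (D : Decomp M d r) (hd : d ≤ 1) {X : Set α} (hX : X ⊆ M.E) (hXnt : X.Nontrivial)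
    (hXc : (M.E \ X).Nonempty) : mlambda M X (M.E \ X) ≤ r := by
  have hd1 : ∀ v, D.G.dist D.center v ≤ 1 := fun v => (D.radius_le v).trans hd
  obtain ⟨x, hx, y, hy, hxy⟩ := hXnt
  obtain ⟨z, hzE, hzX⟩ := hXc
  obtain ⟨u, -, rfl⟩ := D.label_surj x (hX hx)
  obtain ⟨v, -, rfl⟩ := D.label_surj y (hX hy)
  obtain ⟨w, -, rfl⟩ := D.label_surj z hzE
  have hcenter : ¬ IsLeaf D.G D.center :=
    not_isLeaf_of_forall_dist_le_one D.tree.connected hd1 (u₁ := u) (u₂ := v) (u₃ := w)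
      (by rintro rfl; exact hxy rfl) (by rintro rfl; exact hzX hx) (by rintro rfl; exact hzX hy)
  have hS : UnionOfParts D.G D.center {u | IsLeaf D.G u ∧ D.label u ∈ X} :=
    ⟨fun h => hcenter h.1, fun a ha b hab => eq_of_offRel D.tree hd1 hab ▸ ha⟩
  have hlabel : D.label '' {u ∈ {u | IsLeaf D.G u ∧ D.label u ∈ X} | IsLeaf D.G u} = X := by
    ext e
    refine ⟨fun ⟨u, ⟨⟨_, hu⟩, _⟩, he⟩ => he ▸ hu, fun he => ?_⟩
    obtain ⟨u, hu, rfl⟩ := D.label_surj e (hX he)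
    exact ⟨u, ⟨⟨hu, he⟩, hu⟩, rfl⟩
  simpa only [hlabel] using D.conn D.center hcenter _ hS

lemma isAcyclic_fromRel_parent {V : Type*} {par : V → V} (ht : V → ℕ)
    (hpar : ∀ v, par v ≠ v → ht (par v) < ht v) :
    (fromRel fun u v => par u = v).IsAcyclic := by
  classical
  intro v c hc
  obtain ⟨u, hu, hmax⟩ := Finset.exists_max_image c.support.toFinset ht
    ⟨v, List.mem_toFinset.mpr c.start_mem_support⟩
  rw [List.mem_toFinset] at hu
  have hc' := hc.rotate hu
  -- Only the parent of a vertex of maximal height can be its neighbour on the cycle.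
  have hparent : ∀ w ∈ (c.rotate u hu).support, (fromRel fun u v => par u = v).Adj u w →
      w = par u := by
    rintro w hw ⟨hne, hup | rfl⟩
    · exact hup.symm
    · have hw' := hmax w (List.mem_toFinset.mpr ((c.mem_support_rotate_iff _ hu).mp hw))
      exact absurd (hpar w hne) hw'.not_gt
  exact hc'.snd_ne_penultimate <|
    (hparent _ (Walk.getVert_mem_support ..) (Walk.adj_snd hc'.not_nil)).trans
      (hparent _ (Walk.getVert_mem_support ..) (Walk.adj_penultimate hc'.not_nil).symm).symm

inductive FatTreeVertex (n : ℕ) : Type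
  | root
  | branch (i : Fin n)
  | leaf (i j : Fin n)
  deriving Fintype

namespace FatTreeVertex

variable {n : ℕ}

def parent : FatTreeVertex n → FatTreeVertex n
  | root => root
  | branch _ => root
  | leaf i _ => branch i

def height : FatTreeVertex n → ℕ
  | root => 0
  | branch _ => 1
  | leaf _ _ => 2

lemma height_parent_lt : ∀ v : FatTreeVertex n, v.parent ≠ v → v.parent.height < v.height
  | root, h => absurd rfl h
  | branch _, _ => Nat.zero_lt_one
  | leaf _ _, _ => Nat.one_lt_two

end FatTreeVertex

open FatTreeVertex

def fatTree (n : ℕ) : SimpleGraph (FatTreeVertex n) :=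
  fromRel fun u v => u.parent = v

section FatTree

variable {n : ℕ}

@[simp] lemma fatTree_adj_root_branch (i : Fin n) : (fatTree n).Adj root (branch i) := by
  simp [fatTree, parent]

@[simp] lemma fatTree_adj_branch_leaf (i j : Fin n) : (fatTree n).Adj (branch i) (leaf i j) := by
  simp [fatTree, parent]

lemma fatTree_adj_leaf {i j : Fin n} {v : FatTreeVertex n} :
    (fatTree n).Adj (leaf i j) v ↔ v = branch i := by
  cases v <;> simp [fatTree, parent, eq_comm]

lemma fatTree_connected (n : ℕ) : (fatTree n).Connected := by
  refine (connected_iff_exists_forall_reachable _).mpr ⟨root, fun v => ?_⟩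
  cases v with
  | root => rfl
  | branch i => exact (fatTree_adj_root_branch i).reachable
  | leaf i j =>
    exact (fatTree_adj_root_branch i).reachable.trans (fatTree_adj_branch_leaf i j).reachable

lemma fatTree_isTree (n : ℕ) : (fatTree n).IsTree :=
  ⟨fatTree_connected n, isAcyclic_fromRel_parent height height_parent_lt⟩

lemma fatTree_dist_root_le (v : FatTreeVertex n) : (fatTree n).dist root v ≤ 2 := by
  cases v with
  | root => simp
  | branch i => simp [dist_eq_one_iff_adj.mpr (fatTree_adj_root_branch i)]
  | leaf i j =>
    exact dist_le ((Walk.nil.cons (fatTree_adj_branch_leaf i j)).cons (fatTree_adj_root_branch i))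

lemma isLeaf_leaf (i j : Fin n) : IsLeaf (fatTree n) (leaf i j) := fun _ _ hu hw =>
  (fatTree_adj_leaf.mp hu).trans (fatTree_adj_leaf.mp hw).symm

lemma isLeaf_fatTree_iff (hn : 2 ≤ n) {v : FatTreeVertex n} :
    IsLeaf (fatTree n) v ↔ ∃ i j, v = leaf i j := by
  have : Nontrivial (Fin n) := Fin.nontrivial_iff_two_le.mpr hn
  obtain ⟨i₁, i₂, hi⟩ := exists_pair_ne (Fin n)
  refine ⟨fun hv => ?_, fun ⟨i, j, hv⟩ => hv ▸ isLeaf_leaf i j⟩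
  cases v with
  | root =>
    exact absurd (hv _ _ (fatTree_adj_root_branch i₁) (fatTree_adj_root_branch i₂)) (by simpa)
  | branch i =>
    exact absurd (hv _ _ (fatTree_adj_branch_leaf i i₁) (fatTree_adj_branch_leaf i i₂)) (by simpa)
  | leaf i j => exact ⟨i, j, rfl⟩

lemma exists_two_le_dist_fatTree (hn : 2 ≤ n) (w : FatTreeVertex n) :
    ∃ v, 2 ≤ (fatTree n).dist w v := by
  have : Nontrivial (Fin n) := Fin.nontrivial_iff_two_le.mpr hn
  obtain ⟨i, hwi, hwl⟩ : ∃ i, w ≠ branch i ∧ ∀ j, w ≠ leaf i j := by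
    cases w with
    | root => exact ⟨Classical.arbitrary _, by simp, by simp⟩
    | branch i₀ | leaf i₀ _ =>
      obtain ⟨i, hi⟩ := exists_ne i₀
      exact ⟨i, by simp [hi.symm], by simp [hi.symm]⟩
  refine ⟨leaf i i, (fatTree_connected n).one_lt_dist_of_ne_of_not_adj (hwl i) fun h => hwi ?_⟩
  exact fatTree_adj_leaf.mp h.symm

lemma offRel_fatTree_leaf {v : FatTreeVertex n} (hv : ¬ IsLeaf (fatTree n) v)
    {i : Fin n} (hvi : v ≠ branch i) (j j' : Fin n) :
    offRel (fatTree n) v (leaf i j) (leaf i j') := by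
  have hne : ∀ j, leaf i j ≠ v := fun j h => hv (h ▸ isLeaf_leaf i j)
  have hreach : ∀ j, ((fatTree n).comap (Subtype.val : {x // x ≠ v} → _)).Reachable
      ⟨leaf i j, hne j⟩ ⟨branch i, hvi.symm⟩ := fun j =>
    Adj.reachable (fatTree_adj_branch_leaf i j).symm
  exact ⟨hne j, hne j', (hreach j).trans (hreach j').symm⟩

end FatTree

-- `Decomp` only reads the labels of leaves; inner vertices get the dummy label `e₀`.
def fatTreeLabel {n : ℕ} (e₀ : Fin n × Fin n) : FatTreeVertex n → Fin n × Fin n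
  | leaf i j => (i, j)
  | _ => e₀

section BranchDepth

variable {n : ℕ} {M : Matroid (Fin n × Fin n)}

lemma mem_image_fatTreeLabel_iff (hn : 2 ≤ n) {e₀ : Fin n × Fin n} {S : Set (FatTreeVertex n)}
    {i j : Fin n} :
    (i, j) ∈ fatTreeLabel e₀ '' {u ∈ S | IsLeaf (fatTree n) u} ↔ leaf i j ∈ S := by
  refine ⟨?_, fun h => ⟨leaf i j, ⟨h, isLeaf_leaf i j⟩, rfl⟩⟩
  rintro ⟨u, ⟨hu, hleaf⟩, he⟩
  obtain ⟨i', j', rfl⟩ := (isLeaf_fatTree_iff hn).mp hleaf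
  obtain ⟨rfl, rfl⟩ := Prod.mk.inj he
  exact hu

lemma hasBranchDepthLE_two (hn : 2 ≤ n) (hE : M.E = univ)
    (hIndep : ∀ S, M.Indep S ↔ FatCycleIndep n S) : HasBranchDepthLE M 2 := by
  refine ⟨2, 2, le_rfl, le_rfl, ⟨
    { V := FatTreeVertex n
      fin := inferInstance
      G := fatTree n
      tree := fatTree_isTree n
      center := root
      radius_le := fatTree_dist_root_le
      radius_ge := exists_two_le_dist_fatTree hn
      label := fatTreeLabel (⟨0, by omega⟩, ⟨0, by omega⟩)
      label_mem := fun _ _ => hE ▸ mem_univ _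
      label_inj := ?_
      label_surj := fun e _ => ⟨leaf e.1 e.2, isLeaf_leaf _ _, rfl⟩
      conn := ?_ }⟩⟩
  · intro v w hv hw hvw
    obtain ⟨i, j, rfl⟩ := (isLeaf_fatTree_iff hn).mp hv
    obtain ⟨i', j', rfl⟩ := (isLeaf_fatTree_iff hn).mp hw
    obtain ⟨rfl, rfl⟩ := Prod.mk.inj hvw
    rfl
  · intro v hv S hS
    rw [hE]
    refine mlambda_le_two_of_subsingleton hIndep (by omega) (J := {i | v = branch i})
      (fun i hi i' hi' => branch.inj (hi.symm.trans hi')) fun i hi j j' hj => ?_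
    rw [mem_image_fatTreeLabel_iff hn] at hj ⊢
    exact hS.2 _ hj _ (offRel_fatTree_leaf hv hi j j')

lemma not_hasBranchDepthLE_one (hn : 3 ≤ n) (hE : M.E = univ)
    (hIndep : ∀ S, M.Indep S ↔ FatCycleIndep n S) : ¬ HasBranchDepthLE M 1 := by
  rintro ⟨d, r, hd, hr, ⟨D⟩⟩
  let z : Fin n := ⟨0, by omega⟩
  let o : Fin n := ⟨1, by omega⟩
  have hzo : z ≠ o := by simp [z, o, Fin.ext_iff]
  have hX : {e : Fin n × Fin n | e.2 = z}.Nontrivial := ⟨(z, z), rfl, (o, z), rfl, by simp [hzo]⟩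
  have hcompl : {e : Fin n × Fin n | e.2 = o} ⊆ univ \ {e | e.2 = z} :=
    fun e he => ⟨trivial, fun h => hzo (h.symm.trans he)⟩
  have hupper := D.mlambda_le_of_radius_le_one hd (hE ▸ subset_univ _) hX
    (hE ▸ ⟨(z, o), hcompl rfl⟩)
  rw [hE] at hupper
  have hlower := sub_one_le_mlambda hIndep subset_rfl hcompl
  omega

end BranchDepth

/-- The branch-depth of the graphic matroid of the fat cycle `G_n` equals `2`. -/
theorem stmt14 (n : ℕ) (hn : 3 ≤ n) (M : Matroid (Fin n × Fin n))
    (hE : M.E = Set.univ) (hIndep : ∀ S, M.Indep S ↔ FatCycleIndep n S) :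
    HasBranchDepthLE M 2 ∧ ¬ HasBranchDepthLE M 1 :=
  ⟨hasBranchDepthLE_two (by omega) hE hIndep, not_hasBranchDepthLE_one hn hE hIndep⟩
end

section
/- The contraction-deletion-depth of the graphic matroid of the fat cycle G_n (cycle of length n with each edge replaced by n parallel edges) is at least n. -/
namespace Stmt15Aux

variable {n : ℕ}

def Form (S : Set (Fin n × Fin n)) (A : Set (Fin n)) (I : Set (Fin n × Fin n)) : Prop :=
  I ⊆ S ∧ (∀ p ∈ I, p.1 ∈ A) ∧ (∀ i j j', (i,j) ∈ I → (i,j') ∈ I → j = j') ∧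
    ¬ (∀ i ∈ A, ∃ j, (i,j) ∈ I)

def Good (M : Matroid (Fin n × Fin n)) (S : Set (Fin n × Fin n)) (A : Set (Fin n)) : Prop :=
  M.E = S ∧ (∀ I, M.Indep I ↔ Form S A I) ∧ (∀ i ∈ A, ∃ j, (i,j) ∈ S)

lemma exists_ne_of_two_le {β : Type*} {A : Set β} (hA : A.Finite) (h2 : 2 ≤ A.ncard) (i : β) :
    ∃ i' ∈ A, i' ≠ i := by
  obtain ⟨a, b, ha, hb, hab⟩ := (Set.one_lt_ncard_iff hA).mp h2
  rcases eq_or_ne a i with rfl | h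
  · exact ⟨b, hb, hab.symm⟩
  · exact ⟨a, ha, h⟩

lemma form_subsingleton {M : Matroid (Fin n × Fin n)} {S A} (hG : Good M S A)
    (h2 : 2 ≤ A.ncard) {x : Fin n × Fin n} (hx : x ∈ S) (hxA : x.1 ∈ A)
    {D : Set (Fin n × Fin n)} (hD : D ⊆ {x}) : Form S A D := by
  refine ⟨hD.trans (by simpa using hx), fun p hp => by rw [hD hp]; exact hxA, ?_, ?_⟩
  · intro i j j' hj hj'
    have h1 := hD hj; have h2 := hD hj'
    simp only [Set.mem_singleton_iff] at h1 h2
    exact congrArg Prod.snd (h1.trans h2.symm)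
  · intro hall
    obtain ⟨i', hi'A, hi'⟩ := exists_ne_of_two_le (Set.toFinite A) h2 x.1
    obtain ⟨j, hj⟩ := hall i' hi'A
    have := hD hj
    simp only [Set.mem_singleton_iff] at this
    exact hi' (congrArg Prod.fst this)


open Classical in
noncomputable def tch (S : Set (Fin n × Fin n)) (i : Fin n) : Fin n :=
  if h : ∃ j, (i, j) ∈ S then h.choose else i

lemma tch_mem {S : Set (Fin n × Fin n)} {i : Fin n} (h : ∃ j, (i, j) ∈ S) :
    (i, tch S i) ∈ S := by
  simp only [tch, dif_pos h]; exact h.choose_spec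

lemma connTo_of_active {M : Matroid (Fin n × Fin n)} {S A} (hG : Good M S A)
    (h2 : 2 ≤ A.ncard) {e f : Fin n × Fin n} (he : e ∈ S) (heA : e.1 ∈ A)
    (hf : f ∈ S) (hfA : f.1 ∈ A) : ConnTo M e f := by
  rcases eq_or_ne e f with rfl | hef
  · exact Or.inl rfl
  rcases eq_or_ne e.1 f.1 with hcl | hcl
  · -- parallel circuit {e, f}
    refine Or.inr ⟨{e, f}, ⟨?_, ?_, ?_⟩, by simp, by simp⟩
    · rw [hG.1]; intro p hp; rcases hp with rfl | hp
      · exact he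
      · simpa using hp ▸ hf
    · rw [hG.2.1]
      rintro ⟨-, -, hone, -⟩
      have h1 : (e.1, e.2) ∈ ({e, f} : Set (Fin n × Fin n)) := by simp
      have h2 : (e.1, f.2) ∈ ({e, f} : Set (Fin n × Fin n)) := by
        right; rw [hcl]; simp
      have := hone e.1 e.2 f.2 h1 h2
      exact hef (Prod.ext hcl this)
    · intro D hD
      rw [hG.2.1]
      obtain ⟨g, hgC, hgD⟩ := Set.exists_of_ssubset hD
      rcases hgC with rfl | hgf
      · -- g = e missing, D ⊆ {f}
        refine form_subsingleton hG h2 hf hfA (fun p hp => ?_)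
        rcases hD.1 hp with rfl | h
        · exact absurd hp hgD
        · exact h
      · -- g = f missing, D ⊆ {e}
        refine form_subsingleton hG h2 he heA (fun p hp => ?_)
        rcases hD.1 hp with h | h
        · exact h
        · rw [h, ← hgf] at hp; exact absurd hp hgD
  · -- transversal circuit
    classical
    set u : Fin n → Fin n := fun i => if i = e.1 then e.2 else if i = f.1 then f.2 else tch S i
      with hu
    set C : Set (Fin n × Fin n) := (fun i => (i, u i)) '' A with hC
    have huS : ∀ i ∈ A, (i, u i) ∈ S := by
      intro i hi
      rw [hu]; dsimp only
      split
      · next h => rw [h]; exact he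
      · split
        · next h => rw [h]; exact hf
        · exact tch_mem (hG.2.2 i hi)
    have hCS : C ⊆ S := by rintro p ⟨i, hi, rfl⟩; exact huS i hi
    have hmem : ∀ p ∈ C, p = (p.1, u p.1) ∧ p.1 ∈ A := by
      rintro p ⟨i, hi, rfl⟩; exact ⟨rfl, hi⟩
    have heC : e ∈ C := ⟨e.1, heA, by rw [hu]; simp⟩
    have hfC : f ∈ C := ⟨f.1, hfA, by rw [hu]; simp [Ne.symm hcl]⟩
    refine Or.inr ⟨C, ⟨by rw [hG.1]; exact hCS, ?_, ?_⟩, heC, hfC⟩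
    · rw [hG.2.1]
      rintro ⟨-, -, -, hnall⟩
      exact hnall (fun i hi => ⟨u i, ⟨i, hi, rfl⟩⟩)
    · intro D hD
      rw [hG.2.1]
      obtain ⟨g, hgC, hgD⟩ := Set.exists_of_ssubset hD
      obtain ⟨hg, hgA⟩ := hmem g hgC
      refine ⟨(hD.1).trans hCS, fun p hp => (hmem p (hD.1 hp)).2, ?_, ?_⟩
      · intro i j j' hj hj'
        have h1 := (hmem _ (hD.1 hj)).1
        have h2 := (hmem _ (hD.1 hj')).1
        simp only [Prod.mk.injEq] at h1 h2
        rw [h1.2, h2.2]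
      · rintro hall
        obtain ⟨j, hj⟩ := hall g.1 hgA
        have h1 := (hmem _ (hD.1 hj)).1
        simp only [Prod.mk.injEq] at h1
        rw [h1.2] at hj
        rw [hg] at hgD
        exact hgD hj

lemma not_connTo_loop {M : Matroid (Fin n × Fin n)} {S A} (hG : Good M S A)
    {e f : Fin n × Fin n} (heA : e.1 ∈ A) (hfA : f.1 ∉ A) : ¬ ConnTo M e f := by
  rintro (rfl | ⟨C, ⟨hCE, hdep, hmin⟩, heC, hfC⟩)
  · exact hfA heA
  rcases eq_or_ne C {f} with rfl | hne
  · simp only [Set.mem_singleton_iff] at heC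
    exact hfA (heC ▸ heA)
  · have : ({f} : Set _) ⊂ C := ⟨Set.singleton_subset_iff.mpr hfC, fun h => hne (h.antisymm (Set.singleton_subset_iff.mpr hfC))⟩
    have hind := hmin _ this
    rw [hG.2.1] at hind
    exact hfA (hind.2.1 f rfl)

def Act (S : Set (Fin n × Fin n)) (A : Set (Fin n)) : Set (Fin n × Fin n) :=
  {p ∈ S | p.1 ∈ A}

lemma component_eq {M : Matroid (Fin n × Fin n)} {S A} (hG : Good M S A)
    (h2 : 2 ≤ A.ncard) {e : Fin n × Fin n} (he : e ∈ S) (heA : e.1 ∈ A) :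
    component M e = Act S A := by
  ext f
  constructor
  · rintro ⟨hfE, hconn⟩
    rw [hG.1] at hfE
    refine ⟨hfE, ?_⟩
    by_contra hfA
    exact not_connTo_loop hG heA hfA hconn
  · rintro ⟨hfS, hfA⟩
    exact ⟨hG.1 ▸ hfS, connTo_of_active hG h2 he heA hfS hfA⟩

lemma good_restrict_act {M : Matroid (Fin n × Fin n)} {S A} (hG : Good M S A) :
    Good (M.restrict (Act S A)) (Act S A) A := by
  refine ⟨Matroid.restrict_ground_eq, fun I => ?_, fun i hi => ?_⟩
  · rw [Matroid.restrict_indep_iff, hG.2.1]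
    constructor
    · rintro ⟨⟨_, hact, hone, hnall⟩, hIA⟩
      exact ⟨hIA, hact, hone, hnall⟩
    · rintro ⟨hIA, hact, hone, hnall⟩
      exact ⟨⟨fun p hp => (hIA hp).1, hact, hone, hnall⟩, hIA⟩
  · obtain ⟨j, hj⟩ := hG.2.2 i hi
    exact ⟨j, hj, hi⟩

lemma good_del {M : Matroid (Fin n × Fin n)} {S A} (hG : Good M S A)
    {e : Fin n × Fin n} (hcl : ∀ i ∈ A, ∃ j, (i, j) ∈ S \ {e}) :
    Good (M.restrict (S \ {e})) (S \ {e}) A := by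
  refine ⟨Matroid.restrict_ground_eq, fun I => ?_, hcl⟩
  rw [Matroid.restrict_indep_iff, hG.2.1]
  constructor
  · rintro ⟨⟨_, hact, hone, hnall⟩, hIe⟩
    exact ⟨hIe, hact, hone, hnall⟩
  · rintro ⟨hIe, hact, hone, hnall⟩
    exact ⟨⟨fun p hp => (hIe hp).1, hact, hone, hnall⟩, hIe⟩

lemma good_contr {M N : Matroid (Fin n × Fin n)} {S A} (hG : Good M S A)
    {e : Fin n × Fin n} (he : e ∈ S) (heA : e.1 ∈ A) (hc : ContractElem M N e) :
    Good N (S \ {e}) (A \ {e.1}) := by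
  obtain ⟨hNE, hNI⟩ := hc
  refine ⟨by rw [hNE, hG.1], fun I => ?_, fun i hi => ?_⟩
  · rw [hNI, hG.1, hG.2.1]
    constructor
    · rintro ⟨hIe, _, hact, hone, hnall⟩
      refine ⟨hIe, fun p hp => ⟨hact p (Set.mem_insert_of_mem e hp), ?_⟩, ?_, ?_⟩
      · -- p.1 ≠ e.1
        intro hpe
        have hp2 : p.2 = e.2 := by
          refine hone p.1 p.2 e.2 (by simpa using Set.mem_insert_of_mem e hp) ?_
          rw [hpe]
          simp
        exact (hIe hp).2 (Prod.ext hpe hp2)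
      · exact fun i j j' hj hj' => hone i j j' (Set.mem_insert_of_mem e hj) (Set.mem_insert_of_mem e hj')
      · intro hall
        refine hnall (fun i hi => ?_)
        rcases eq_or_ne i e.1 with rfl | hie
        · exact ⟨e.2, by simp⟩
        · obtain ⟨j, hj⟩ := hall i ⟨hi, hie⟩
          exact ⟨j, Set.mem_insert_of_mem e hj⟩
    · rintro ⟨hIe, hact, hone, hnall⟩
      refine ⟨hIe, ?_, ?_, ?_, ?_⟩
      · rintro p (rfl | hp)
        · exact he
        · exact (hIe hp).1
      · rintro p (rfl | hp)
        · exact heA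
        · exact ((hact p hp).1)
      · intro i j j' hj hj'
        rcases hj with hj | hj <;> rcases hj' with hj' | hj'
        · exact (congrArg Prod.snd hj).trans (congrArg Prod.snd hj').symm
        · exact absurd (congrArg Prod.fst hj) (by exact fun h => (hact _ hj').2 (h ▸ rfl))
        · exact absurd (congrArg Prod.fst hj') (by exact fun h => (hact _ hj).2 (h ▸ rfl))
        · exact hone i j j' hj hj'
      · intro hall
        refine hnall (fun i hi => ?_)
        obtain ⟨j, hj⟩ := hall i hi.1
        rcases hj with hj | hj
        · exact absurd (congrArg Prod.fst hj) hi.2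
        · exact ⟨j, hj⟩
  · obtain ⟨j, hj⟩ := hG.2.2 i hi.1
    exact ⟨j, hj, fun h => hi.2 (congrArg Prod.fst h)⟩

lemma cdd_pos {α : Type*} {M : Matroid α} {d : ℕ} (h : CddLE M d) : M.E.Nonempty → 1 ≤ d := by
  induction h with
  | single M e d _ hd => exact fun _ => hd
  | disconn M d hne hconn hcomp ih =>
    intro _
    obtain ⟨e, he⟩ := hne
    refine ih e he ?_
    rw [Matroid.restrict_ground_eq]
    exact ⟨e, he, Or.inl rfl⟩
  | contr M N e d _ _ _ _ _ => omega
  | del M e d _ _ _ => omega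


lemma setdiff_ne (S : Set (Fin n × Fin n)) {e : Fin n × Fin n} {i : Fin n} (hie : i ≠ e.1) :
    {j | (i, j) ∈ S \ {e}} = {j | (i, j) ∈ S} := by
  ext j
  simp only [Set.mem_setOf_eq, Set.mem_diff, Set.mem_singleton_iff]
  exact ⟨fun h => h.1, fun h => ⟨h, fun hh => hie (congrArg Prod.fst hh)⟩⟩

lemma setdiff_eq (S : Set (Fin n × Fin n)) (e : Fin n × Fin n) :
    {j | (e.1, j) ∈ S \ {e}} = {j | (e.1, j) ∈ S} \ {e.2} := by
  ext j
  simp only [Set.mem_setOf_eq, Set.mem_diff, Set.mem_singleton_iff, Prod.ext_iff]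
  tauto

lemma act_fiber {S : Set (Fin n × Fin n)} {A : Set (Fin n)} {i : Fin n} (hi : i ∈ A) :
    {j | (i, j) ∈ Act S A} = {j | (i, j) ∈ S} := by
  ext j
  simp only [Act, Set.mem_setOf_eq, Set.mem_sep_iff]
  exact ⟨fun h => h.1, fun h => ⟨h, hi⟩⟩

lemma main {M : Matroid (Fin n × Fin n)} {d : ℕ} (h : CddLE M d) :
    ∀ S A, Good M S A → ∀ k, k ≤ A.ncard →
      (∀ i ∈ A, k ≤ {j | (i, j) ∈ S}.ncard + 1) → k ≤ d := by
  induction h with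
  | single M e d hE hd =>
    intro S A hG k hkA hks
    by_contra hk
    push_neg at hk
    have h2 : 2 ≤ A.ncard := le_trans (by omega) hkA
    obtain ⟨a, b, ha, hb, hab⟩ := (Set.one_lt_ncard_iff (Set.toFinite A)).mp h2
    obtain ⟨j, hj⟩ := hG.2.2 a ha
    obtain ⟨j', hj'⟩ := hG.2.2 b hb
    rw [← hG.1, hE] at hj hj'
    simp only [Set.mem_singleton_iff] at hj hj'
    exact hab (congrArg Prod.fst (hj.trans hj'.symm))
  | disconn M d hne hconn hcomp ih =>
    intro S A hG k hkA hks
    rcases le_or_gt k 1 with hk1 | hk1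
    · exact le_trans hk1 (cdd_pos (CddLE.disconn M d hne hconn hcomp) hne)
    have h2 : 2 ≤ A.ncard := le_trans hk1 hkA
    obtain ⟨i0, b0, hi0, -, -⟩ := (Set.one_lt_ncard_iff (Set.toFinite A)).mp h2
    obtain ⟨j0, hj0⟩ := hG.2.2 i0 hi0
    have heE : (i0, j0) ∈ M.E := hG.1 ▸ hj0
    have hcompeq : component M (i0, j0) = Act S A := component_eq hG h2 hj0 hi0
    refine ih (i0, j0) heE (Act S A) A (hcompeq ▸ good_restrict_act hG) k hkA ?_
    intro i hi
    rw [act_fiber hi]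
    exact hks i hi
  | contr M N e d heE hind hc ihsub ih =>
    intro S A hG k hkA hks
    rcases Nat.eq_zero_or_pos k with rfl | hk
    · omega
    have heS : e ∈ S := hG.1 ▸ heE
    have heA : e.1 ∈ A := ((hG.2.1 {e}).mp hind).2.1 e rfl
    have hkey := ih (S \ {e}) (A \ {e.1}) (good_contr hG heS heA hc) (k - 1) ?_ ?_
    · omega
    · rw [Set.ncard_diff_singleton_of_mem heA]
      omega
    · intro i hi
      rw [setdiff_ne S hi.2]
      have := hks i hi.1
      omega
  | del M e d heE hsub ih =>
    intro S A hG k hkA hks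
    have heS : e ∈ S := hG.1 ▸ heE
    have hrw : M.E \ {e} = S \ {e} := by rw [hG.1]
    rw [hrw] at ih hsub
    by_cases heA : e.1 ∈ A
    · by_cases hsz : 2 ≤ {j | (e.1, j) ∈ S}.ncard
      · obtain ⟨j', hj', hj'ne⟩ := exists_ne_of_two_le (Set.toFinite _) hsz e.2
        have hcl : ∀ i ∈ A, ∃ j, (i, j) ∈ S \ {e} := by
          intro i hi
          rcases eq_or_ne i e.1 with rfl | hie
          · exact ⟨j', hj', fun h => hj'ne (congrArg Prod.snd h)⟩
          · obtain ⟨j, hj⟩ := hG.2.2 i hi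
            exact ⟨j, hj, fun h => hie (congrArg Prod.fst h)⟩
        have hkey := ih (S \ {e}) A (good_del hG hcl) (k - 1) (by omega) ?_
        · omega
        · intro i hi
          rcases eq_or_ne i e.1 with rfl | hie
          · rw [setdiff_eq S e, Set.ncard_diff_singleton_of_mem (show e.2 ∈ {j | (e.1, j) ∈ S} by
              show (e.1, e.2) ∈ S; rw [Prod.mk.eta]; exact heS)]
            have := hks e.1 hi
            omega
          · rw [setdiff_ne S hie]
            have := hks i hi
            omega
      · have hk2 : k ≤ 2 := le_trans (hks e.1 heA) (by omega)
        rcases le_or_gt k 1 with hk1 | hk1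
        · omega
        · have h2A : 2 ≤ A.ncard := le_trans hk1 hkA
          obtain ⟨i', hi', hine⟩ := exists_ne_of_two_le (Set.toFinite A) h2A e.1
          obtain ⟨j, hj⟩ := hG.2.2 i' hi'
          have hd1 : 1 ≤ d := cdd_pos hsub
            ⟨(i', j), by
              rw [Matroid.restrict_ground_eq]
              exact ⟨hj, fun hh => hine (congrArg Prod.fst hh)⟩⟩
          omega
    · have hcl : ∀ i ∈ A, ∃ j, (i, j) ∈ S \ {e} := by
        intro i hi
        obtain ⟨j, hj⟩ := hG.2.2 i hi
        refine ⟨j, hj, fun h => heA ?_⟩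
        rw [← congrArg Prod.fst h]
        exact hi
      have hkey := ih (S \ {e}) A (good_del hG hcl) k hkA ?_
      · omega
      · intro i hi
        have hie : i ≠ e.1 := fun h => heA (h ▸ hi)
        rw [setdiff_ne S hie]
        exact hks i hi

end Stmt15Aux

/-- The contraction-deletion-depth of the graphic matroid of the fat cycle `G_n`
is at least `n`. -/
theorem stmt15 (n : ℕ) (hn : 3 ≤ n) (M : Matroid (Fin n × Fin n))
    (hE : M.E = Set.univ) (hIndep : ∀ S, M.Indep S ↔ FatCycleIndep n S)
    (d : ℕ) (h : CddLE M d) : n ≤ d := by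
  have hG : Stmt15Aux.Good M Set.univ Set.univ := by
    refine ⟨hE, fun I => ?_, fun i _ => ⟨⟨0, by omega⟩, trivial⟩⟩
    rw [hIndep]
    constructor
    · rintro ⟨hone, hnall⟩
      exact ⟨Set.subset_univ I, fun _ _ => trivial, hone,
        fun hall => hnall fun i => hall i trivial⟩
    · rintro ⟨_, _, hone, hnall⟩
      exact ⟨hone, fun hall => hnall fun i _ => hall i⟩
  refine Stmt15Aux.main h Set.univ Set.univ hG n (by simp [Set.ncard_univ]) ?_
  intro i _
  have : {j : Fin n | (i, j) ∈ (Set.univ : Set (Fin n × Fin n))} = Set.univ := by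
    ext j; simp
  rw [this]
  simp [Set.ncard_univ]
end
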